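/- arXiv:1504.06499 — 5 statements merged into one kernel-verified Lean document; each statement's English description precedes it below -/
import Mathlib

section
/- Let c₄₀, c₃₁, c₂₂, c₁₃, c₀₄ be real numbers. Define f(x,y) = y² + x³ + c₄₀x⁴ + c₃₁x³y + c₂₂x²y² + c₁₃xy³ + c₀₄y⁴ and g(x,y) = y² + x³ + c₄₀x⁴ + c₁₃xy³. Set q₁(x,y,z) = x − (1/3)c₂₂z, q₂(x,y,z) = y + (1/2)c₃₁z, q₃(x,y,z) = z, and p(x,y,z) = 1 + c₃₁y + (c₀₄ + (1/4)c₃₁²)z. Then the function (x,y) ↦ q₃(x,y,g(x,y))/p(x,y,g(x,y)) − f(q₁(x,y,g(x,y))/p(x,y,g(x,y)), q₂(x,y,g(x,y))/p(x,y,g(x,y))) is o(‖(x,y)‖⁴) as (x,y) → (0,0). Hence the 4-jets of the Monge forms z = f and z = g at the origin are projectively equivalent. -/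
/-!
Clearing denominators, `p⁴ F = z p³ - B² p² - A³ p - Q(A, B)` with `A = q₁`, `B = q₂` and `Q` the
quartic part of `f`. The choice of `p` makes `p z - B² = (z - y²) + c₀₄ z²`, and expanding in
`s = p - 1` gives `p⁴ F = (z - g(x, y)) + R(x, y, z)`, where every summand of `R` has order at
least 5 once `z = g(x, y)`: there `x, y, s` have order 1, `z` order 2, `z - y²` order 3 and
`z - y² - x³` order 4. Since `p → 1`, the defect on the graph of `g` is `O(‖(x, y)‖⁵)`.
-/

open Asymptotics Filter Topology

namespace Asymptotics

variable {E R : Type*} [SeminormedAddCommGroup E] [SeminormedRing R] {m n : ℕ}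

theorem IsBigO.mul_norm_pow {l : Filter E} {f g : E → R} (hf : f =O[l] fun x => ‖x‖ ^ m)
    (hg : g =O[l] fun x => ‖x‖ ^ n) :
    (fun x => f x * g x) =O[l] fun x => ‖x‖ ^ (m + n) := by
  simpa only [pow_add] using hf.mul hg

theorem IsBigO.pow_norm_pow {l : Filter E} {f : E → R} (hf : f =O[l] fun x => ‖x‖ ^ m)
    (k : ℕ) : (fun x => f x ^ k) =O[l] fun x => ‖x‖ ^ (m * k) := by
  simpa only [pow_mul] using hf.pow k

theorem IsBigO.norm_pow_of_le {f : E → R} (hmn : m ≤ n)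
    (h : f =O[𝓝 0] fun x => ‖x‖ ^ n) : f =O[𝓝 0] fun x => ‖x‖ ^ m := by
  rcases hmn.eq_or_lt with rfl | hlt
  · exact h
  · exact h.trans (isLittleO_norm_pow_norm_pow hlt).isBigO

theorem IsBigO.mul_sub_mul_norm_pow {f₁ f₂ g₁ g₂ : E → R}
    (h₁ : (fun x => f₁ x - g₁ x) =O[𝓝 0] fun x => ‖x‖ ^ (m + 1))
    (hg₁ : g₁ =O[𝓝 0] fun x => ‖x‖ ^ m)
    (h₂ : (fun x => f₂ x - g₂ x) =O[𝓝 0] fun x => ‖x‖ ^ (n + 1))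
    (hg₂ : g₂ =O[𝓝 0] fun x => ‖x‖ ^ n) :
    (fun x => f₁ x * f₂ x - g₁ x * g₂ x) =O[𝓝 0] fun x => ‖x‖ ^ (m + n + 1) := by
  have hf₂ : f₂ =O[𝓝 0] fun x => ‖x‖ ^ n :=
    ((h₂.norm_pow_of_le n.le_succ).add hg₂).congr_left fun x => sub_add_cancel _ _
  have hleft := h₁.mul_norm_pow hf₂
  have hright := hg₁.mul_norm_pow h₂
  rw [Nat.add_right_comm] at hleft
  rw [← Nat.add_assoc] at hright
  exact (hleft.add hright).congr_left fun x => by noncomm_ring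

theorem IsBigO.pow_sub_pow_norm_pow {f g : E → R}
    (h : (fun x => f x - g x) =O[𝓝 0] fun x => ‖x‖ ^ (m + 1))
    (hg : g =O[𝓝 0] fun x => ‖x‖ ^ m) (k : ℕ) :
    (fun x => f x ^ k - g x ^ k) =O[𝓝 0] fun x => ‖x‖ ^ (m * k + 1) := by
  induction k with
  | zero => exact (isBigO_zero _ _).congr_left fun x => by simp
  | succ k ih => simpa only [pow_succ, Nat.mul_succ] using
      ih.mul_sub_mul_norm_pow (hg.pow_norm_pow k) h hg

end Asymptotics

noncomputable section MongeForm

variable (c40 c31 c22 c13 c04 : ℝ)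

def mongeF (x y : ℝ) : ℝ :=
  y ^ 2 + x ^ 3 + c40 * x ^ 4 + c31 * x ^ 3 * y + c22 * x ^ 2 * y ^ 2
    + c13 * x * y ^ 3 + c04 * y ^ 4

def mongeG (x y : ℝ) : ℝ := y ^ 2 + x ^ 3 + c40 * x ^ 4 + c13 * x * y ^ 3

def quarticForm (x y : ℝ) : ℝ :=
  c40 * x ^ 4 + c31 * x ^ 3 * y + c22 * x ^ 2 * y ^ 2 + c13 * x * y ^ 3 + c04 * y ^ 4

def projDenom (y z : ℝ) : ℝ := 1 + c31 * y + (c04 + (1 / 4) * c31 ^ 2) * z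

def projDefect (x y z : ℝ) : ℝ :=
  z / projDenom c31 c04 y z
    - mongeF c40 c31 c22 c13 c04 ((x - (1 / 3) * c22 * z) / projDenom c31 c04 y z)
        ((y + (1 / 2) * c31 * z) / projDenom c31 c04 y z)

def defectRemainder (x y z : ℝ) : ℝ :=
  c04 * (z - y ^ 2) * (z + y ^ 2) + c22 * x ^ 2 * (z - y ^ 2) - c22 ^ 2 / 3 * x * z ^ 2
    + c22 ^ 3 / 27 * z ^ 3 + (c04 + (1 / 4) * c31 ^ 2) * z * x ^ 3
    + (c31 * y + (c04 + (1 / 4) * c31 ^ 2) * z)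
      * (2 * (z - y ^ 2 - x ^ 3) + 2 * c04 * z ^ 2 + (x ^ 3 - (x - (1 / 3) * c22 * z) ^ 3))
    + (c31 * y + (c04 + (1 / 4) * c31 ^ 2) * z) ^ 2 * (z - y ^ 2 + c04 * z ^ 2)
    - (quarticForm c40 c31 c22 c13 c04 (x - (1 / 3) * c22 * z) (y + (1 / 2) * c31 * z)
      - quarticForm c40 c31 c22 c13 c04 x y)

variable {c40 c31 c22 c13 c04} in
theorem projDefect_eq {x y z : ℝ} (hp : projDenom c31 c04 y z ≠ 0) :
    projDefect c40 c31 c22 c13 c04 x y z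
      = (z - mongeG c40 c13 x y + defectRemainder c40 c31 c22 c13 c04 x y z)
        / projDenom c31 c04 y z ^ 4 := by
  rw [eq_div_iff (pow_ne_zero 4 hp)]
  unfold projDefect mongeF mongeG defectRemainder quarticForm
  field_simp
  unfold projDenom
  ring

theorem quarticForm_sub_isBigO {E : Type*} [SeminormedAddCommGroup E] {x y A B : E → ℝ}
    (hx : x =O[𝓝 0] fun P => ‖P‖ ^ 1) (hy : y =O[𝓝 0] fun P => ‖P‖ ^ 1)
    (hA : (fun P => A P - x P) =O[𝓝 0] fun P => ‖P‖ ^ (1 + 1))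
    (hB : (fun P => B P - y P) =O[𝓝 0] fun P => ‖P‖ ^ (1 + 1)) :
    (fun P => quarticForm c40 c31 c22 c13 c04 (A P) (B P)
        - quarticForm c40 c31 c22 c13 c04 (x P) (y P)) =O[𝓝 0] fun P => ‖P‖ ^ 5 := by
  have h40 := (hA.pow_sub_pow_norm_pow hx 4).const_mul_left c40
  have h31 := ((hA.pow_sub_pow_norm_pow hx 3).mul_sub_mul_norm_pow
    (hx.pow_norm_pow 3) hB hy).const_mul_left c31
  have h22 := ((hA.pow_sub_pow_norm_pow hx 2).mul_sub_mul_norm_pow (hx.pow_norm_pow 2)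
    (hB.pow_sub_pow_norm_pow hy 2) (hy.pow_norm_pow 2)).const_mul_left c22
  have h13 := (hA.mul_sub_mul_norm_pow hx (hB.pow_sub_pow_norm_pow hy 3)
    (hy.pow_norm_pow 3)).const_mul_left c13
  have h04 := (hB.pow_sub_pow_norm_pow hy 4).const_mul_left c04
  exact ((((h40.add h31).add h22).add h13).add h04).congr_left fun P => by
    unfold quarticForm; ring

theorem defectRemainder_isBigO :
    (fun P : ℝ × ℝ => defectRemainder c40 c31 c22 c13 c04 P.1 P.2 (mongeG c40 c13 P.1 P.2))
      =O[𝓝 0] fun P => ‖P‖ ^ 5 := by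
  have hx : (fun P : ℝ × ℝ => P.1) =O[𝓝 0] fun P => ‖P‖ ^ 1 := by
    simpa using isBigO_fst_prod' (f' := fun P : ℝ × ℝ => P) (l := 𝓝 0) |>.norm_right
  have hy : (fun P : ℝ × ℝ => P.2) =O[𝓝 0] fun P => ‖P‖ ^ 1 := by
    simpa using isBigO_snd_prod' (f' := fun P : ℝ × ℝ => P) (l := 𝓝 0) |>.norm_right
  have hr : (fun P : ℝ × ℝ => mongeG c40 c13 P.1 P.2 - P.2 ^ 2 - P.1 ^ 3)
      =O[𝓝 0] fun P => ‖P‖ ^ 4 :=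
    (((hx.pow_norm_pow 4).const_mul_left c40).add
      ((hx.mul_norm_pow (hy.pow_norm_pow 3)).const_mul_left c13)).congr_left fun P => by
        unfold mongeG; ring
  have hd : (fun P : ℝ × ℝ => mongeG c40 c13 P.1 P.2 - P.2 ^ 2) =O[𝓝 0] fun P => ‖P‖ ^ 3 :=
    ((hr.norm_pow_of_le (by norm_num)).add (hx.pow_norm_pow 3)).congr_left fun P => by ring
  have hz : (fun P : ℝ × ℝ => mongeG c40 c13 P.1 P.2) =O[𝓝 0] fun P => ‖P‖ ^ 2 :=
    ((hd.norm_pow_of_le (by norm_num)).add (hy.pow_norm_pow 2)).congr_left fun P => by ring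
  have hs : (fun P : ℝ × ℝ => c31 * P.2 + (c04 + (1 / 4) * c31 ^ 2) * mongeG c40 c13 P.1 P.2)
      =O[𝓝 0] fun P => ‖P‖ ^ 1 :=
    (hy.const_mul_left c31).add ((hz.norm_pow_of_le (by norm_num)).const_mul_left _)
  have hA : (fun P : ℝ × ℝ => (P.1 - (1 / 3) * c22 * mongeG c40 c13 P.1 P.2) - P.1)
      =O[𝓝 0] fun P => ‖P‖ ^ (1 + 1) :=
    (hz.const_mul_left (-((1 / 3) * c22))).congr_left fun P => by ring
  have hB : (fun P : ℝ × ℝ => (P.2 + (1 / 2) * c31 * mongeG c40 c13 P.1 P.2) - P.2)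
      =O[𝓝 0] fun P => ‖P‖ ^ (1 + 1) :=
    (hz.const_mul_left ((1 / 2) * c31)).congr_left fun P => by ring
  have hcube := (hA.pow_sub_pow_norm_pow hx 3).neg_left
  have h1 := (hd.const_mul_left c04).mul_norm_pow (hz.add (hy.pow_norm_pow 2))
  have h2 := ((hx.pow_norm_pow 2).const_mul_left c22).mul_norm_pow hd
  have h3 := (hx.const_mul_left (c22 ^ 2 / 3)).mul_norm_pow (hz.pow_norm_pow 2)
  have h4 := ((hz.pow_norm_pow 3).const_mul_left (c22 ^ 3 / 27)).norm_pow_of_le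
    (m := 5) (by norm_num)
  have h5 := (hz.const_mul_left (c04 + (1 / 4) * c31 ^ 2)).mul_norm_pow (hx.pow_norm_pow 3)
  have h6 := hs.mul_norm_pow (((hr.const_mul_left 2).add
    ((hz.pow_norm_pow 2).const_mul_left (2 * c04))).add hcube)
  have h7 := (hs.pow_norm_pow 2).mul_norm_pow
    (hd.add (((hz.pow_norm_pow 2).const_mul_left c04).norm_pow_of_le (by norm_num)))
  have h8 := quarticForm_sub_isBigO c40 c31 c22 c13 c04 hx hy hA hB
  exact (((((((h1.add h2).sub h3).add h4).add h5).add h6).add h7).sub h8).congr_left fun P => by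
    unfold defectRemainder; ring

theorem projDefect_mongeG_isBigO :
    (fun P : ℝ × ℝ => projDefect c40 c31 c22 c13 c04 P.1 P.2 (mongeG c40 c13 P.1 P.2))
      =O[𝓝 0] fun P => ‖P‖ ^ 5 := by
  have hp : Tendsto (fun P : ℝ × ℝ => projDenom c31 c04 P.2 (mongeG c40 c13 P.1 P.2))
      (𝓝 0) (𝓝 1) := by
    have hcont : Continuous fun P : ℝ × ℝ => projDenom c31 c04 P.2 (mongeG c40 c13 P.1 P.2) := by
      unfold projDenom mongeG; fun_prop
    simpa [projDenom, mongeG] using hcont.tendsto 0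
  have hinv := ((hp.pow 4).inv₀ (by norm_num)).isBigO_one ℝ
  refine ((defectRemainder_isBigO c40 c31 c22 c13 c04).mul hinv).congr' ?_ (by simp)
  filter_upwards [hp.eventually_ne one_ne_zero] with P hP
  rw [projDefect_eq hP, sub_self, zero_add, div_eq_mul_inv]

end MongeForm

/-- the 4-jets of the Monge forms `z = f` and `z = g` at the origin are
projectively equivalent via the explicit projective transformation `(q₁/p, q₂/p, q₃/p)`. -/
theorem stmt1 (c40 c31 c22 c13 c04 : ℝ) :
    let f : ℝ → ℝ → ℝ := fun x y =>
      y ^ 2 + x ^ 3 + c40 * x ^ 4 + c31 * x ^ 3 * y + c22 * x ^ 2 * y ^ 2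
        + c13 * x * y ^ 3 + c04 * y ^ 4
    let g : ℝ → ℝ → ℝ := fun x y => y ^ 2 + x ^ 3 + c40 * x ^ 4 + c13 * x * y ^ 3
    let q1 : ℝ → ℝ → ℝ → ℝ := fun x _ z => x - (1 / 3) * c22 * z
    let q2 : ℝ → ℝ → ℝ → ℝ := fun _ y z => y + (1 / 2) * c31 * z
    let q3 : ℝ → ℝ → ℝ → ℝ := fun _ _ z => z
    let p : ℝ → ℝ → ℝ → ℝ := fun _ y z => 1 + c31 * y + (c04 + (1 / 4) * c31 ^ 2) * z
    (fun P : ℝ × ℝ =>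
        q3 P.1 P.2 (g P.1 P.2) / p P.1 P.2 (g P.1 P.2)
          - f (q1 P.1 P.2 (g P.1 P.2) / p P.1 P.2 (g P.1 P.2))
              (q2 P.1 P.2 (g P.1 P.2) / p P.1 P.2 (g P.1 P.2)))
      =o[nhds (0 : ℝ × ℝ)] (fun P : ℝ × ℝ => ‖P‖ ^ 4) := by
  intro f g q1 q2 q3 p
  exact (projDefect_mongeG_isBigO c40 c31 c22 c13 c04).trans_isLittleO
    (isLittleO_norm_pow_norm_pow (by norm_num))
end

section
/- Let ε ∈ {1, −1} and let c₃₁, c₂₂, c₁₃, c₀₄ be real numbers. Define f(x,y) = y² + εx⁴ + c₃₁x³y + c₂₂x²y² + c₁₃xy³ + c₀₄y⁴. The cubic equation 4εt³ + 3c₃₁t² + 2c₂₂t + c₁₃ = 0 has a real root; for every real root u₁, set q₁(x,y,z) = x + u₁y, q₂(x,y,z) = y, q₃(x,y,z) = z, p(x,y,z) = 1 + (εu₁⁴ + c₃₁u₁³ + c₂₂u₁² + c₁₃u₁ + c₀₄)z, and g(x,y) = y² + εx⁴ + (c₃₁ + 4εu₁)x³y + (c₂₂ + 3c₃₁u₁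 + 6εu₁²)x²y². Then the function (x,y) ↦ q₃(x,y,g(x,y))/p(x,y,g(x,y)) − f(q₁(x,y,g(x,y))/p(x,y,g(x,y)), q₂(x,y,g(x,y))/p(x,y,g(x,y))) is o(‖(x,y)‖⁴) as (x,y) → (0,0). Hence the 4-jet of f is projectively equivalent to y² ± x⁴ + αx³y + βx²y² for some real α, β. -/
open Asymptotics

lemma cubic_root_aux (b c d : ℝ) : ∃ t : ℝ, 4 * t ^ 3 + 3 * b * t ^ 2 + 2 * c * t + d = 0 := by
  set M : ℝ := 1 + 3 * |b| + 2 * |c| + |d| with hM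
  have hb : |b| ≥ 0 := abs_nonneg b
  have hc : |c| ≥ 0 := abs_nonneg c
  have hd : |d| ≥ 0 := abs_nonneg d
  have hM1 : 1 ≤ M := by simp only [hM]; linarith
  have hle : -M ≤ M := by linarith
  have hcont : ContinuousOn (fun t : ℝ => 4 * t ^ 3 + 3 * b * t ^ 2 + 2 * c * t + d)
      (Set.Icc (-M) M) := by fun_prop
  have hbb : b ≤ |b| := le_abs_self b
  have hbb' : -b ≤ |b| := neg_le_abs b
  have hcc : c ≤ |c| := le_abs_self c
  have hcc' : -c ≤ |c| := neg_le_abs c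
  have hdd : d ≤ |d| := le_abs_self d
  have hdd' : -d ≤ |d| := neg_le_abs d
  have hneg : 4 * (-M) ^ 3 + 3 * b * (-M) ^ 2 + 2 * c * (-M) + d ≤ 0 := by
    nlinarith [sq_nonneg M, sq_nonneg (M - 1)]
  have hpos : 0 ≤ 4 * M ^ 3 + 3 * b * M ^ 2 + 2 * c * M + d := by
    nlinarith [sq_nonneg M, sq_nonneg (M - 1)]
  have := intermediate_value_Icc hle hcont
  have h0 : (0 : ℝ) ∈ Set.Icc (4 * (-M) ^ 3 + 3 * b * (-M) ^ 2 + 2 * c * (-M) + d)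
      (4 * M ^ 3 + 3 * b * M ^ 2 + 2 * c * M + d) := ⟨hneg, hpos⟩
  obtain ⟨t, _, ht⟩ := this h0
  exact ⟨t, ht⟩

open Asymptotics

lemma key2 (ε c31 c22 c13 c04 u1 x y g K p N : ℝ)
    (hu : 4 * ε * u1 ^ 3 + 3 * c31 * u1 ^ 2 + 2 * c22 * u1 + c13 = 0)
    (hg : g = y ^ 2 + ε * x ^ 4 + (c31 + 4 * ε * u1) * x ^ 3 * y
      + (c22 + 3 * c31 * u1 + 6 * ε * u1 ^ 2) * x ^ 2 * y ^ 2)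
    (hK : K = ε * u1 ^ 4 + c31 * u1 ^ 3 + c22 * u1 ^ 2 + c13 * u1 + c04)
    (hp : p = 1 + K * g)
    (hN : N = K * (g - y ^ 2) * (3 * g + y ^ 2) + K ^ 2 * g ^ 2 * (3 * g - y ^ 2)
      + K ^ 3 * g ^ 4) :
    g / p - ((y / p) ^ 2 + ε * ((x + u1 * y) / p) ^ 4
      + c31 * ((x + u1 * y) / p) ^ 3 * (y / p) + c22 * ((x + u1 * y) / p) ^ 2 * (y / p) ^ 2
      + c13 * ((x + u1 * y) / p) * (y / p) ^ 3 + c04 * (y / p) ^ 4) = N / p ^ 4 := by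
  by_cases h0 : p = 0
  · simp [h0]
  · have hQ : ε * (x + u1 * y) ^ 4 + c31 * (x + u1 * y) ^ 3 * y
        + c22 * (x + u1 * y) ^ 2 * y ^ 2 + c13 * (x + u1 * y) * y ^ 3 + c04 * y ^ 4
        = (g - y ^ 2) + K * y ^ 4 := by
      rw [hg, hK]; linear_combination (x * y ^ 3) * hu
    have hsplit : g / p - ((y / p) ^ 2 + ε * ((x + u1 * y) / p) ^ 4
        + c31 * ((x + u1 * y) / p) ^ 3 * (y / p) + c22 * ((x + u1 * y) / p) ^ 2 * (y / p) ^ 2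
        + c13 * ((x + u1 * y) / p) * (y / p) ^ 3 + c04 * (y / p) ^ 4)
        = (g * p ^ 3 - (y ^ 2 * p ^ 2 + (ε * (x + u1 * y) ^ 4 + c31 * (x + u1 * y) ^ 3 * y
          + c22 * (x + u1 * y) ^ 2 * y ^ 2 + c13 * (x + u1 * y) * y ^ 3 + c04 * y ^ 4)))
          / p ^ 4 := by
      field_simp
      ring
    rw [hsplit, hQ]
    congr 1
    rw [hp, hN]
    ring
open Asymptotics

lemma monoO (c : ℝ) (i j k : ℕ) (hk : i + j = k) :
    (fun P : ℝ × ℝ => c * P.1 ^ i * P.2 ^ j) =O[nhds (0 : ℝ × ℝ)] fun P => ‖P‖ ^ k := by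
  subst hk
  apply IsBigO.of_bound |c|
  filter_upwards with P
  have hx : |P.1| ≤ ‖P‖ := norm_fst_le P
  have hy : |P.2| ≤ ‖P‖ := norm_snd_le P
  have h1 : ‖c * P.1 ^ i * P.2 ^ j‖ = |c| * |P.1| ^ i * |P.2| ^ j := by
    rw [Real.norm_eq_abs, abs_mul, abs_mul, abs_pow, abs_pow]
  have h2 : ‖‖P‖ ^ (i + j)‖ = ‖P‖ ^ i * ‖P‖ ^ j := by
    rw [Real.norm_eq_abs, abs_of_nonneg (by positivity), pow_add]
  rw [h1, h2, ← mul_assoc]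
  gcongr

lemma normpow_bigO (m n : ℕ) (h : n ≤ m) :
    (fun P : ℝ × ℝ => ‖P‖ ^ m) =O[nhds (0 : ℝ × ℝ)] fun P => ‖P‖ ^ n := by
  apply IsBigO.of_bound 1
  have hball : Metric.closedBall (0 : ℝ × ℝ) 1 ∈ nhds (0 : ℝ × ℝ) :=
    Metric.closedBall_mem_nhds 0 one_pos
  filter_upwards [hball] with P hP
  have h1 : ‖P‖ ≤ 1 := by simpa using hP
  have h0 : (0 : ℝ) ≤ ‖P‖ := norm_nonneg P
  rw [Real.norm_eq_abs, Real.norm_eq_abs, abs_of_nonneg (by positivity),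
    abs_of_nonneg (by positivity), one_mul]
  exact pow_le_pow_of_le_one h0 h1 h

lemma asymp (ε A B K : ℝ) :
    (fun P : ℝ × ℝ =>
      (K * ((P.2 ^ 2 + ε * P.1 ^ 4 + A * P.1 ^ 3 * P.2 + B * P.1 ^ 2 * P.2 ^ 2) - P.2 ^ 2)
        * (3 * (P.2 ^ 2 + ε * P.1 ^ 4 + A * P.1 ^ 3 * P.2 + B * P.1 ^ 2 * P.2 ^ 2) + P.2 ^ 2)
      + K ^ 2 * (P.2 ^ 2 + ε * P.1 ^ 4 + A * P.1 ^ 3 * P.2 + B * P.1 ^ 2 * P.2 ^ 2) ^ 2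
        * (3 * (P.2 ^ 2 + ε * P.1 ^ 4 + A * P.1 ^ 3 * P.2 + B * P.1 ^ 2 * P.2 ^ 2) - P.2 ^ 2)
      + K ^ 3 * (P.2 ^ 2 + ε * P.1 ^ 4 + A * P.1 ^ 3 * P.2 + B * P.1 ^ 2 * P.2 ^ 2) ^ 4)
      / (1 + K * (P.2 ^ 2 + ε * P.1 ^ 4 + A * P.1 ^ 3 * P.2 + B * P.1 ^ 2 * P.2 ^ 2)) ^ 4)
      =o[nhds (0 : ℝ × ℝ)] (fun P : ℝ × ℝ => ‖P‖ ^ 4) := by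
  set G : ℝ × ℝ → ℝ := fun P =>
    P.2 ^ 2 + ε * P.1 ^ 4 + A * P.1 ^ 3 * P.2 + B * P.1 ^ 2 * P.2 ^ 2 with hGdef
  have hR : (fun P : ℝ × ℝ => ε * P.1 ^ 4 + A * P.1 ^ 3 * P.2 + B * P.1 ^ 2 * P.2 ^ 2)
      =O[nhds (0 : ℝ × ℝ)] fun P => ‖P‖ ^ 4 :=
    (((monoO ε 4 0 4 rfl).add (monoO A 3 1 4 rfl)).add
      (monoO B 2 2 4 rfl)).congr_left fun P => by ring
  have hy2 : (fun P : ℝ × ℝ => P.2 ^ 2) =O[nhds (0 : ℝ × ℝ)] fun P => ‖P‖ ^ 2 :=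
    (monoO 1 0 2 2 rfl).congr_left fun P => by ring
  have hG : G =O[nhds (0 : ℝ × ℝ)] fun P => ‖P‖ ^ 2 :=
    (hy2.add (hR.trans (normpow_bigO 4 2 (by norm_num)))).congr_left fun P => by
      simp only [hGdef]; ring
  have hGp : (fun P : ℝ × ℝ => 3 * G P + P.2 ^ 2) =O[nhds (0 : ℝ × ℝ)]
      fun P => ‖P‖ ^ 2 := (hG.const_mul_left 3).add hy2
  have hGm : (fun P : ℝ × ℝ => 3 * G P - P.2 ^ 2) =O[nhds (0 : ℝ × ℝ)]
      fun P => ‖P‖ ^ 2 := (hG.const_mul_left 3).sub hy2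
  have hRG : (fun P : ℝ × ℝ => G P - P.2 ^ 2) =O[nhds (0 : ℝ × ℝ)] fun P => ‖P‖ ^ 4 :=
    hR.congr_left fun P => by simp only [hGdef]; ring
  have hT1 : (fun P : ℝ × ℝ => K * (G P - P.2 ^ 2)
      * (3 * G P + P.2 ^ 2)) =O[nhds (0 : ℝ × ℝ)] fun P => ‖P‖ ^ 4 * ‖P‖ ^ 2 :=
    (hRG.const_mul_left K).mul hGp
  have hT2 : (fun P : ℝ × ℝ => K ^ 2 * (G P) ^ 2 * (3 * G P - P.2 ^ 2))
      =O[nhds (0 : ℝ × ℝ)] fun P => (‖P‖ ^ 2) ^ 2 * ‖P‖ ^ 2 :=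
    ((hG.pow 2).const_mul_left (K ^ 2)).mul hGm
  have hT3 : (fun P : ℝ × ℝ => K ^ 3 * (G P) ^ 4) =O[nhds (0 : ℝ × ℝ)]
      fun P => (‖P‖ ^ 2) ^ 4 := (hG.pow 4).const_mul_left (K ^ 3)
  have h6 : (fun P : ℝ × ℝ => ‖P‖ ^ 6) =o[nhds (0 : ℝ × ℝ)] fun P => ‖P‖ ^ 4 :=
    isLittleO_norm_pow_norm_pow (by norm_num)
  have h8 : (fun P : ℝ × ℝ => ‖P‖ ^ 8) =o[nhds (0 : ℝ × ℝ)] fun P => ‖P‖ ^ 4 :=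
    isLittleO_norm_pow_norm_pow (by norm_num)
  have hN : (fun P : ℝ × ℝ =>
      K * (G P - P.2 ^ 2) * (3 * G P + P.2 ^ 2)
      + K ^ 2 * (G P) ^ 2 * (3 * G P - P.2 ^ 2) + K ^ 3 * (G P) ^ 4)
      =o[nhds (0 : ℝ × ℝ)] fun P => ‖P‖ ^ 4 := by
    refine IsLittleO.add (IsLittleO.add ?_ ?_) ?_
    · exact hT1.trans_isLittleO ((h6.congr_left fun P => by ring))
    · exact hT2.trans_isLittleO ((h6.congr_left fun P => by ring))
    · exact hT3.trans_isLittleO ((h8.congr_left fun P => by ring))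
  have hPv : (fun P : ℝ × ℝ => ((1 + K * G P) ^ 4)⁻¹) =O[nhds (0 : ℝ × ℝ)]
      fun _ => (1 : ℝ) := by
    have h1 : ContinuousAt (fun P : ℝ × ℝ => (1 + K * G P) ^ 4) 0 := by
      simp only [hGdef]; fun_prop
    have h2 : ((1 + K * G (0 : ℝ × ℝ)) ^ 4) ≠ 0 := by simp [hGdef]
    have h3 : ContinuousAt (fun P : ℝ × ℝ => ((1 + K * G P) ^ 4)⁻¹) 0 := h1.inv₀ h2
    have h4 : Filter.Tendsto (fun P : ℝ × ℝ => ((1 + K * G P) ^ 4)⁻¹) (nhds 0)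
        (nhds (((1 + K * G (0 : ℝ × ℝ)) ^ 4)⁻¹)) := h3.tendsto
    have h5 : (((1 + K * G (0 : ℝ × ℝ)) ^ 4)⁻¹) = 1 := by simp [hGdef]
    rw [h5] at h4
    exact h4.isBigO_one ℝ
  have := hN.mul_isBigO hPv
  refine this.congr (fun P => ?_) fun P => mul_one _
  simp only [hGdef]
  rw [div_eq_mul_inv]

/-- the cubic `4εt³ + 3c₃₁t² + 2c₂₂t + c₁₃ = 0` has a real root, and for
every real root `u₁`, the transformation `q₁ = x + u₁y, q₂ = y, q₃ = z,
p = 1 + (εu₁⁴ + c₃₁u₁³ + c₂₂u₁² + c₁₃u₁ + c₀₄)z` renders the 4-jet of `f` projectively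
equivalent to `y² ± x⁴ + αx³y + βx²y²`. -/
theorem stmt8 (ε c31 c22 c13 c04 : ℝ) (hε : ε = 1 ∨ ε = -1) :
    let f : ℝ → ℝ → ℝ := fun x y =>
      y ^ 2 + ε * x ^ 4 + c31 * x ^ 3 * y + c22 * x ^ 2 * y ^ 2 + c13 * x * y ^ 3
        + c04 * y ^ 4
    (∃ t : ℝ, 4 * ε * t ^ 3 + 3 * c31 * t ^ 2 + 2 * c22 * t + c13 = 0) ∧
    ∀ u1 : ℝ, 4 * ε * u1 ^ 3 + 3 * c31 * u1 ^ 2 + 2 * c22 * u1 + c13 = 0 →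
      (fun P : ℝ × ℝ =>
          let gv := P.2 ^ 2 + ε * P.1 ^ 4 + (c31 + 4 * ε * u1) * P.1 ^ 3 * P.2
            + (c22 + 3 * c31 * u1 + 6 * ε * u1 ^ 2) * P.1 ^ 2 * P.2 ^ 2
          let pv := 1 + (ε * u1 ^ 4 + c31 * u1 ^ 3 + c22 * u1 ^ 2 + c13 * u1 + c04) * gv
          gv / pv - f ((P.1 + u1 * P.2) / pv) (P.2 / pv))
        =o[nhds (0 : ℝ × ℝ)] (fun P : ℝ × ℝ => ‖P‖ ^ 4) := by
  intro f
  have hε2 : ε * ε = 1 := by rcases hε with h | h <;> rw [h] <;> norm_num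
  constructor
  · obtain ⟨t, ht⟩ := cubic_root_aux (ε * c31) (ε * c22) (ε * c13)
    exact ⟨t, by linear_combination ε * ht - (3 * c31 * t ^ 2 + 2 * c22 * t + c13) * hε2⟩
  · intro u1 hu
    exact (asymp ε (c31 + 4 * ε * u1) (c22 + 3 * c31 * u1 + 6 * ε * u1 ^ 2)
      (ε * u1 ^ 4 + c31 * u1 ^ 3 + c22 * u1 ^ 2 + c13 * u1 + c04)).congr_left
      fun P => (key2 ε c31 c22 c13 c04 u1 P.1 P.2 _ _ _ _ hu rfl rfl rfl rfl).symm
end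

section
/- Let c₄₀, c₃₁, c₂₂, c₁₃, c₀₄ be real numbers with c₄₀ ≠ 0 and c₀₄ ≠ 0, and define f(x,y) = xy² + c₄₀x⁴ + c₃₁x³y + c₂₂x²y² + c₁₃xy³ + c₀₄y⁴. Then there exist a real number α, a sign ε ∈ {1, −1}, and real numbers u₁, u₂, u₃, v₁, v₂, v₃, c, w₁, w₂, w₃ with c(u₁v₂ − u₂v₁) ≠ 0 such that, setting q₁ = u₁x + u₂y + u₃z, q₂ = v₁x + v₂y + v₃z, q₃ = cz, p = 1 + w₁x + w₂y + w₃z, and g(x,y) = xy² + x⁴ + εy⁴ + αx³y, the function (x,y) ↦ q₃(x,y,g(x,y))/p(x,y,g(x,y)) − f(q₁(x,y,g(x,y))/p(x,y,g(x,y)), q₂(x,y,g(x,y))/p(x,y,g(x,y))) is o(‖(x,y)‖⁴) as (x,y) → (0,0). Hence the 4-jet of f is projectively equivalent to xy² + x⁴ ± y⁴ + αx³y. -/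
open Asymptotics Filter

private lemma stmt10_norm5 : (fun P : ℝ × ℝ => ‖P‖ ^ 5) =o[nhds (0 : ℝ × ℝ)] (fun P : ℝ × ℝ => ‖P‖ ^ 4) := by
  rw [isLittleO_iff]
  intro c hc
  filter_upwards [Metric.ball_mem_nhds (0 : ℝ × ℝ) hc] with P hP
  rw [mem_ball_zero_iff] at hP
  have h0 : (0:ℝ) ≤ ‖P‖ := norm_nonneg P
  have h5 : ‖P‖ ^ 5 ≤ c * ‖P‖ ^ 4 := by
    calc ‖P‖ ^ 5 = ‖P‖ * ‖P‖ ^ 4 := by ring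
    _ ≤ c * ‖P‖ ^ 4 := mul_le_mul_of_nonneg_right hP.le (by positivity)
  calc ‖‖P‖ ^ 5‖ = ‖P‖ ^ 5 := by rw [Real.norm_eq_abs, abs_of_nonneg (pow_nonneg h0 5)]
  _ ≤ c * ‖P‖ ^ 4 := h5
  _ = c * ‖‖P‖ ^ 4‖ := by rw [Real.norm_eq_abs, abs_of_nonneg (pow_nonneg h0 4)]

private lemma stmt10_mono (C : ℝ) (i j : ℕ) (h : 5 ≤ i + j) :
    (fun P : ℝ × ℝ => C * P.1 ^ i * P.2 ^ j) =o[nhds (0 : ℝ × ℝ)] (fun P : ℝ × ℝ => ‖P‖ ^ 4) := by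
  refine IsBigO.trans_isLittleO ?_ stmt10_norm5
  rw [isBigO_iff]
  refine ⟨|C|, ?_⟩
  filter_upwards [Metric.ball_mem_nhds (0 : ℝ × ℝ) one_pos] with P hP
  rw [mem_ball_zero_iff] at hP
  have h0 : (0:ℝ) ≤ ‖P‖ := norm_nonneg P
  have e1 : |P.1| ^ i ≤ ‖P‖ ^ i := pow_le_pow_left₀ (abs_nonneg _) (norm_fst_le P) i
  have e2 : |P.2| ^ j ≤ ‖P‖ ^ j := pow_le_pow_left₀ (abs_nonneg _) (norm_snd_le P) j
  calc ‖C * P.1 ^ i * P.2 ^ j‖ = |C| * (|P.1| ^ i * |P.2| ^ j) := by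
        rw [Real.norm_eq_abs, abs_mul, abs_mul, abs_pow, abs_pow, mul_assoc]
  _ ≤ |C| * (‖P‖ ^ i * ‖P‖ ^ j) :=
        mul_le_mul_of_nonneg_left (mul_le_mul e1 e2 (by positivity) (by positivity)) (abs_nonneg C)
  _ = |C| * ‖P‖ ^ (i + j) := by rw [pow_add]
  _ ≤ |C| * ‖P‖ ^ 5 := mul_le_mul_of_nonneg_left (pow_le_pow_of_le_one h0 hP.le h) (abs_nonneg C)
  _ = |C| * ‖‖P‖ ^ 5‖ := by rw [Real.norm_eq_abs, abs_of_nonneg (pow_nonneg h0 5)]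

set_option maxHeartbeats 3200000 in
private lemma stmt10_key (c40 c31 c22 c13 c04 a b e al x y : ℝ)
    (hb2 : b ^ 2 = c40 * a ^ 3) (he : c40 * c04 * a ^ 2 = e) (hal : al * b = c31 * a ^ 2) :
    a * b ^ 2 * (x * y ^ 2 + x ^ 4 + e * y ^ 4 + al * x ^ 3 * y) * (1 + c22 * a / 2 * x + c13 * b / 2 * y) ^ 3 - a * x * (b * y) ^ 2 * (1 + c22 * a / 2 * x + c13 * b / 2 * y) - (c40 * (a * x) ^ 4 + c31 * (a * x) ^ 3 * (b * y) + c22 * (a * x) ^ 2 * (b * y) ^ 2 + c13 * (a * x) * (b * y) ^ 3 + c04 * (b * y) ^ 4)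
    = (3/2 * a ^ 3 * b ^ 3 * c40 * c13 * c04) * x ^ 0 * y ^ 5 + (3/4 * a * b ^ 4 * c13 ^ 2) * x ^ 1 * y ^ 4 + (3/2 * a ^ 4 * b ^ 2 * c40 * c22 * c04) * x ^ 1 * y ^ 4 + (3/2 * a ^ 2 * b ^ 3 * c22 * c13) * x ^ 2 * y ^ 3 + (3/4 * a ^ 3 * b ^ 2 * c22 ^ 2) * x ^ 3 * y ^ 2 + (3/2 * a ^ 3 * b ^ 2 * c31 * c13) * x ^ 3 * y ^ 2 + (3/2 * a * b ^ 3 * c13) * x ^ 4 * y ^ 1 + (3/2 * a ^ 4 * b * c31 * c22) * x ^ 4 * y ^ 1 + (3/2 * a ^ 2 * b ^ 2 * c22) * x ^ 5 * y ^ 0 + (3/4 * a ^ 3 * b ^ 4 * c40 * c13 ^ 2 * c04) * x ^ 0 * y ^ 6 + (1/8 * a * b ^ 5 * c13 ^ 3) * x ^ 1 * y ^ 5 + (3/2 * a ^ 4 * b ^ 3 * c40 * c22 * c13 * c04) * x ^ 1 * y ^ 5 + (3/8 * a ^ 2 * b ^ 4 * c22 * c13 ^ 2) * x ^ 2 * y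 ^ 4 + (3/4 * a ^ 5 * b ^ 2 * c40 * c22 ^ 2 * c04) * x ^ 2 * y ^ 4 + (3/8 * a ^ 3 * b ^ 3 * c22 ^ 2 * c13) * x ^ 3 * y ^ 3 + (3/4 * a ^ 3 * b ^ 3 * c31 * c13 ^ 2) * x ^ 3 * y ^ 3 + (3/4 * a * b ^ 4 * c13 ^ 2) * x ^ 4 * y ^ 2 + (1/8 * a ^ 4 * b ^ 2 * c22 ^ 3) * x ^ 4 * y ^ 2 + (3/2 * a ^ 4 * b ^ 2 * c31 * c22 * c13) * x ^ 4 * y ^ 2 + (3/2 * a ^ 2 * b ^ 3 * c22 * c13) * x ^ 5 * y ^ 1 + (3/4 * a ^ 5 * b * c31 * c22 ^ 2) * x ^ 5 * y ^ 1 + (3/4 * a ^ 3 * b ^ 2 * c22 ^ 2) * x ^ 6 * y ^ 0 + (1/8 * a ^ 3 * b ^ 5 * c40 * c13 ^ 3 * c04) * x ^ 0 * y ^ 7 + (3/8 * a ^ 4 * b ^ 4 * c40 * c22 * c13 ^ 2 * c04) * x ^ 1 * y ^ 6 + (3/8 * a ^ 5 * b ^ 3 * c40 * c22 ^ 2 *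 c13 * c04) * x ^ 2 * y ^ 5 + (1/8 * a ^ 3 * b ^ 4 * c31 * c13 ^ 3) * x ^ 3 * y ^ 4 + (1/8 * a ^ 6 * b ^ 2 * c40 * c22 ^ 3 * c04) * x ^ 3 * y ^ 4 + (1/8 * a * b ^ 5 * c13 ^ 3) * x ^ 4 * y ^ 3 + (3/8 * a ^ 4 * b ^ 3 * c31 * c22 * c13 ^ 2) * x ^ 4 * y ^ 3 + (3/8 * a ^ 2 * b ^ 4 * c22 * c13 ^ 2) * x ^ 5 * y ^ 2 + (3/8 * a ^ 5 * b ^ 2 * c31 * c22 ^ 2 * c13) * x ^ 5 * y ^ 2 + (3/8 * a ^ 3 * b ^ 3 * c22 ^ 2 * c13) * x ^ 6 * y ^ 1 + (1/8 * a ^ 6 * b * c31 * c22 ^ 3) * x ^ 6 * y ^ 1 + (1/8 * a ^ 4 * b ^ 2 * c22 ^ 3) * x ^ 7 * y ^ 0 := by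
  linear_combination ((-1) * y ^ 4 * b ^ 2 * c04 + 1 * x ^ 4 * a) * hb2 + ((-1) * y ^ 4 * a * b ^ 2 + (-3/2) * y ^ 5 * a * b ^ 3 * c13 + (-3/4) * y ^ 6 * a * b ^ 4 * c13 ^ 2 + (-1/8) * y ^ 7 * a * b ^ 5 * c13 ^ 3 + (-3/2) * x * y ^ 4 * a ^ 2 * b ^ 2 * c22 + (-3/2) * x * y ^ 5 * a ^ 2 * b ^ 3 * c22 * c13 + (-3/8) * x * y ^ 6 * a ^ 2 * b ^ 4 * c22 * c13 ^ 2 + (-3/4) * x ^ 2 * y ^ 4 * a ^ 3 * b ^ 2 * c22 ^ 2 + (-3/8) * x ^ 2 * y ^ 5 * a ^ 3 * b ^ 3 * c22 ^ 2 * c13 + (-1/8) * x ^ 3 * y ^ 4 * a ^ 4 * b ^ 2 * c22 ^ 3) * he + (1 * x ^ 3 * y * a * b + 3/2 * x ^ 3 * y ^ 2 * a * b ^ 2 * c13 + 3/4 * x ^ 3 * y ^ 3 * a * b ^ 3 * c13 ^ 2 + 1/8 * x ^ 3 * y ^ 4 * a * b ^ 4 * c13 ^ 3 + 3/2 * x ^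 4 * y * a ^ 2 * b * c22 + 3/2 * x ^ 4 * y ^ 2 * a ^ 2 * b ^ 2 * c22 * c13 + 3/8 * x ^ 4 * y ^ 3 * a ^ 2 * b ^ 3 * c22 * c13 ^ 2 + 3/4 * x ^ 5 * y * a ^ 3 * b * c22 ^ 2 + 3/8 * x ^ 5 * y ^ 2 * a ^ 3 * b ^ 2 * c22 ^ 2 * c13 + 1/8 * x ^ 6 * y * a ^ 4 * b * c22 ^ 3) * hal

set_option maxHeartbeats 3200000 in
/-- for `c₄₀ ≠ 0` and `c₀₄ ≠ 0`, the 4-jet of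
`xy² + c₄₀x⁴ + c₃₁x³y + c₂₂x²y² + c₁₃xy³ + c₀₄y⁴` is projectively equivalent to
`xy² + x⁴ ± y⁴ + αx³y`. -/
theorem stmt10 (c40 c31 c22 c13 c04 : ℝ) (h40 : c40 ≠ 0) (h04 : c04 ≠ 0) :
    let f : ℝ → ℝ → ℝ := fun x y =>
      x * y ^ 2 + c40 * x ^ 4 + c31 * x ^ 3 * y + c22 * x ^ 2 * y ^ 2
        + c13 * x * y ^ 3 + c04 * y ^ 4
    ∃ α ε : ℝ, (ε = 1 ∨ ε = -1) ∧
      ∃ u1 u2 u3 v1 v2 v3 c w1 w2 w3 : ℝ,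
        c * (u1 * v2 - u2 * v1) ≠ 0 ∧
        (fun P : ℝ × ℝ =>
            let gv := P.1 * P.2 ^ 2 + P.1 ^ 4 + ε * P.2 ^ 4 + α * P.1 ^ 3 * P.2
            let pv := 1 + w1 * P.1 + w2 * P.2 + w3 * gv
            (c * gv) / pv
              - f ((u1 * P.1 + u2 * P.2 + u3 * gv) / pv)
                  ((v1 * P.1 + v2 * P.2 + v3 * gv) / pv))
          =o[nhds (0 : ℝ × ℝ)] (fun P : ℝ × ℝ => ‖P‖ ^ 4) := by
  intro f
  have hprod : c40 * c04 ≠ 0 := mul_ne_zero h40 h04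
  have hc40abs : (0:ℝ) < |c40| := abs_pos.2 h40
  obtain ⟨eps, hepsdef⟩ : ∃ eps : ℝ, eps = if 0 < c40 * c04 then 1 else -1 := ⟨_, rfl⟩
  obtain ⟨t, htdef⟩ : ∃ t : ℝ, t = Real.sqrt |c40 * c04| := ⟨_, rfl⟩
  have ht : 0 < t := by rw [htdef]; exact Real.sqrt_pos.2 (abs_pos.2 hprod)
  have ht2 : t ^ 2 = |c40 * c04| := by rw [htdef]; exact Real.sq_sqrt (abs_nonneg _)
  obtain ⟨a, hadef⟩ : ∃ a : ℝ, a = c40 / (|c40| * t) := ⟨_, rfl⟩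
  have ha : a ≠ 0 := by rw [hadef]; exact div_ne_zero h40 (ne_of_gt (mul_pos hc40abs ht))
  have h1 : a ^ 2 * |c40 * c04| = 1 := by
    rw [hadef, div_pow, mul_pow, sq_abs, ht2]
    field_simp
  have h2pos : 0 < c40 ^ 2 := by rw [← sq_abs]; exact pow_pos hc40abs 2
  have hq : c40 * a ^ 3 = (c40 ^ 2) ^ 2 / (|c40| * t) ^ 3 := by
    rw [hadef, div_pow]
    field_simp
  have hc40a3 : 0 < c40 * a ^ 3 := by
    rw [hq]; exact div_pos (pow_pos h2pos 2) (pow_pos (mul_pos hc40abs ht) 3)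
  have ha2 : c40 * c04 * a ^ 2 = eps := by
    by_cases hpos : 0 < c40 * c04
    · rw [hepsdef, if_pos hpos]
      rw [abs_of_pos hpos] at h1
      linear_combination h1
    · rw [hepsdef, if_neg hpos]
      have hneg : c40 * c04 < 0 := lt_of_le_of_ne (not_lt.1 hpos) hprod
      rw [abs_of_neg hneg] at h1
      linear_combination -h1
  obtain ⟨b, hbdef⟩ : ∃ b : ℝ, b = Real.sqrt (c40 * a ^ 3) := ⟨_, rfl⟩
  have hbpos : 0 < b := by rw [hbdef]; exact Real.sqrt_pos.2 hc40a3
  have hb : b ≠ 0 := ne_of_gt hbpos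
  have hb2 : b ^ 2 = c40 * a ^ 3 := by rw [hbdef]; exact Real.sq_sqrt hc40a3.le
  obtain ⟨alp, halpdef⟩ : ∃ alp : ℝ, alp = c31 * a ^ 2 / b := ⟨_, rfl⟩
  have halp : alp * b = c31 * a ^ 2 := by rw [halpdef]; field_simp
  refine ⟨alp, eps, ?_, a, 0, 0, 0, b, 0, a * b ^ 2, c22 * a / 2, c13 * b / 2, 0, ?_, ?_⟩
  · rw [hepsdef]; split_ifs
    · left; rfl
    · right; rfl
  · have hrw : a * b ^ 2 * (a * b - 0 * 0) = a ^ 2 * b ^ 3 := by ring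
    rw [hrw]
    positivity
  · have hev : ∀ᶠ P : ℝ × ℝ in nhds 0, 1/2 < 1 + c22 * a / 2 * P.1 + c13 * b / 2 * P.2 := by
      have hc : ContinuousAt (fun P : ℝ × ℝ => 1 + c22 * a / 2 * P.1 + c13 * b / 2 * P.2) 0 := by
        fun_prop
      have h2 : Filter.Tendsto (fun P : ℝ × ℝ => 1 + c22 * a / 2 * P.1 + c13 * b / 2 * P.2)
          (nhds 0) (nhds 1) := by
        have h3 : Filter.Tendsto (fun P : ℝ × ℝ => 1 + c22 * a / 2 * P.1 + c13 * b / 2 * P.2)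
            (nhds 0) (nhds (1 + c22 * a / 2 * (0 : ℝ × ℝ).1 + c13 * b / 2 * (0 : ℝ × ℝ).2)) := hc
        simpa using h3
      exact h2.eventually (eventually_gt_nhds (by norm_num))
    have hN : (fun P : ℝ × ℝ => (3/2 * a ^ 3 * b ^ 3 * c40 * c13 * c04) * P.1 ^ 0 * P.2 ^ 5 + (3/4 * a * b ^ 4 * c13 ^ 2) * P.1 ^ 1 * P.2 ^ 4 + (3/2 * a ^ 4 * b ^ 2 * c40 * c22 * c04) * P.1 ^ 1 * P.2 ^ 4 + (3/2 * a ^ 2 * b ^ 3 * c22 * c13) * P.1 ^ 2 * P.2 ^ 3 + (3/4 * a ^ 3 * b ^ 2 * c22 ^ 2) * P.1 ^ 3 * P.2 ^ 2 + (3/2 * a ^ 3 * b ^ 2 * c31 * c13) * P.1 ^ 3 * P.2 ^ 2 + (3/2 * a * b ^ 3 * c13) * P.1 ^ 4 * P.2 ^ 1 + (3/2 * a ^ 4 * b * c31 * c22) * P.1 ^ 4 * P.2 ^ 1 + (3/2 * a ^ 2 * b ^ 2 * c22) * P.1 ^ 5 * P.2 ^ 0 + (3/4 * a ^ 3 * b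 ^ 4 * c40 * c13 ^ 2 * c04) * P.1 ^ 0 * P.2 ^ 6 + (1/8 * a * b ^ 5 * c13 ^ 3) * P.1 ^ 1 * P.2 ^ 5 + (3/2 * a ^ 4 * b ^ 3 * c40 * c22 * c13 * c04) * P.1 ^ 1 * P.2 ^ 5 + (3/8 * a ^ 2 * b ^ 4 * c22 * c13 ^ 2) * P.1 ^ 2 * P.2 ^ 4 + (3/4 * a ^ 5 * b ^ 2 * c40 * c22 ^ 2 * c04) * P.1 ^ 2 * P.2 ^ 4 + (3/8 * a ^ 3 * b ^ 3 * c22 ^ 2 * c13) * P.1 ^ 3 * P.2 ^ 3 + (3/4 * a ^ 3 * b ^ 3 * c31 * c13 ^ 2) * P.1 ^ 3 * P.2 ^ 3 + (3/4 * a * b ^ 4 * c13 ^ 2) * P.1 ^ 4 * P.2 ^ 2 + (1/8 * a ^ 4 * b ^ 2 * c22 ^ 3) * P.1 ^ 4 * P.2 ^ 2 + (3/2 * a ^ 4 * b ^ 2 * c31 * c22 * c13) * P.1 ^ 4 * P.2 ^ 2 + (3/2 * a ^ 2 * b ^ 3 * c22 * c13) * P.1 ^ 5 * P.2 ^ 1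 + (3/4 * a ^ 5 * b * c31 * c22 ^ 2) * P.1 ^ 5 * P.2 ^ 1 + (3/4 * a ^ 3 * b ^ 2 * c22 ^ 2) * P.1 ^ 6 * P.2 ^ 0 + (1/8 * a ^ 3 * b ^ 5 * c40 * c13 ^ 3 * c04) * P.1 ^ 0 * P.2 ^ 7 + (3/8 * a ^ 4 * b ^ 4 * c40 * c22 * c13 ^ 2 * c04) * P.1 ^ 1 * P.2 ^ 6 + (3/8 * a ^ 5 * b ^ 3 * c40 * c22 ^ 2 * c13 * c04) * P.1 ^ 2 * P.2 ^ 5 + (1/8 * a ^ 3 * b ^ 4 * c31 * c13 ^ 3) * P.1 ^ 3 * P.2 ^ 4 + (1/8 * a ^ 6 * b ^ 2 * c40 * c22 ^ 3 * c04) * P.1 ^ 3 * P.2 ^ 4 + (1/8 * a * b ^ 5 * c13 ^ 3) * P.1 ^ 4 * P.2 ^ 3 + (3/8 * a ^ 4 * b ^ 3 * c31 * c22 * c13 ^ 2) * P.1 ^ 4 * P.2 ^ 3 + (3/8 * a ^ 2 * b ^ 4 * c22 * c13 ^ 2) * P.1 ^ 5 * P.2 ^ 2 + (3/8 * a ^ 5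 * b ^ 2 * c31 * c22 ^ 2 * c13) * P.1 ^ 5 * P.2 ^ 2 + (3/8 * a ^ 3 * b ^ 3 * c22 ^ 2 * c13) * P.1 ^ 6 * P.2 ^ 1 + (1/8 * a ^ 6 * b * c31 * c22 ^ 3) * P.1 ^ 6 * P.2 ^ 1 + (1/8 * a ^ 4 * b ^ 2 * c22 ^ 3) * P.1 ^ 7 * P.2 ^ 0)
        =o[nhds (0 : ℝ × ℝ)] (fun P : ℝ × ℝ => ‖P‖ ^ 4) := by
      exact ((((((((((((((((((((((((((((((((((stmt10_mono (3/2 * a ^ 3 * b ^ 3 * c40 * c13 * c04) 0 5 (by norm_num)).add (stmt10_mono (3/4 * a * b ^ 4 * c13 ^ 2) 1 4 (by norm_num))).add (stmt10_mono (3/2 * a ^ 4 * b ^ 2 * c40 * c22 * c04) 1 4 (by norm_num))).add (stmt10_mono (3/2 * a ^ 2 * b ^ 3 * c22 * c13) 2 3 (by norm_num))).add (stmt10_mono (3/4 * a ^ 3 * b ^ 2 * c22 ^ 2) 3 2 (by norm_num))).add (stmt10_mono (3/2 * a ^ 3 * b ^ 2 * c31 * c13) 3 2 (by norm_num))).add (stmt10_mono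 (3/2 * a * b ^ 3 * c13) 4 1 (by norm_num))).add (stmt10_mono (3/2 * a ^ 4 * b * c31 * c22) 4 1 (by norm_num))).add (stmt10_mono (3/2 * a ^ 2 * b ^ 2 * c22) 5 0 (by norm_num))).add (stmt10_mono (3/4 * a ^ 3 * b ^ 4 * c40 * c13 ^ 2 * c04) 0 6 (by norm_num))).add (stmt10_mono (1/8 * a * b ^ 5 * c13 ^ 3) 1 5 (by norm_num))).add (stmt10_mono (3/2 * a ^ 4 * b ^ 3 * c40 * c22 * c13 * c04) 1 5 (by norm_num))).add (stmt10_mono (3/8 * a ^ 2 * b ^ 4 * c22 * c13 ^ 2) 2 4 (by norm_num))).add (stmt10_mono (3/4 * a ^ 5 * b ^ 2 * c40 * c22 ^ 2 * c04) 2 4 (by norm_num))).add (stmt10_mono (3/8 * a ^ 3 * b ^ 3 * c22 ^ 2 * c13) 3 3 (by norm_num))).add (stmt10_mono (3/4 * a ^ 3 * b ^ 3 * c31 * c13 ^ 2) 3 3 (by norm_num))).add (stmt10_mono (3/4 * a * b ^ 4 * c13 ^ 2) 4 2 (by norm_num))).add (stmt10_mono (1/8 * a ^ 4 * b ^ 2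 * c22 ^ 3) 4 2 (by norm_num))).add (stmt10_mono (3/2 * a ^ 4 * b ^ 2 * c31 * c22 * c13) 4 2 (by norm_num))).add (stmt10_mono (3/2 * a ^ 2 * b ^ 3 * c22 * c13) 5 1 (by norm_num))).add (stmt10_mono (3/4 * a ^ 5 * b * c31 * c22 ^ 2) 5 1 (by norm_num))).add (stmt10_mono (3/4 * a ^ 3 * b ^ 2 * c22 ^ 2) 6 0 (by norm_num))).add (stmt10_mono (1/8 * a ^ 3 * b ^ 5 * c40 * c13 ^ 3 * c04) 0 7 (by norm_num))).add (stmt10_mono (3/8 * a ^ 4 * b ^ 4 * c40 * c22 * c13 ^ 2 * c04) 1 6 (by norm_num))).add (stmt10_mono (3/8 * a ^ 5 * b ^ 3 * c40 * c22 ^ 2 * c13 * c04) 2 5 (by norm_num))).add (stmt10_mono (1/8 * a ^ 3 * b ^ 4 * c31 * c13 ^ 3) 3 4 (by norm_num))).add (stmt10_mono (1/8 * a ^ 6 * b ^ 2 * c40 * c22 ^ 3 * c04) 3 4 (by norm_num))).add (stmt10_mono (1/8 * a * b ^ 5 * c13 ^ 3) 4 3 (by norm_num))).add (stmt10_mono (3/8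 * a ^ 4 * b ^ 3 * c31 * c22 * c13 ^ 2) 4 3 (by norm_num))).add (stmt10_mono (3/8 * a ^ 2 * b ^ 4 * c22 * c13 ^ 2) 5 2 (by norm_num))).add (stmt10_mono (3/8 * a ^ 5 * b ^ 2 * c31 * c22 ^ 2 * c13) 5 2 (by norm_num))).add (stmt10_mono (3/8 * a ^ 3 * b ^ 3 * c22 ^ 2 * c13) 6 1 (by norm_num))).add (stmt10_mono (1/8 * a ^ 6 * b * c31 * c22 ^ 3) 6 1 (by norm_num))).add (stmt10_mono (1/8 * a ^ 4 * b ^ 2 * c22 ^ 3) 7 0 (by norm_num)))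
    have hinv : (fun P : ℝ × ℝ => (((1 + c22 * a / 2 * P.1 + c13 * b / 2 * P.2)) ^ 4)⁻¹) =O[nhds (0 : ℝ × ℝ)]
        (fun _ : ℝ × ℝ => (1:ℝ)) := by
      rw [isBigO_iff]
      refine ⟨16, ?_⟩
      filter_upwards [hev] with P hP
      have hp : (0:ℝ) < (1 + c22 * a / 2 * P.1 + c13 * b / 2 * P.2) := by linarith
      have hsq : (1/4:ℝ) ≤ (1 + c22 * a / 2 * P.1 + c13 * b / 2 * P.2) ^ 2 := by nlinarith
      have h16 : (16:ℝ)⁻¹ ≤ ((1 + c22 * a / 2 * P.1 + c13 * b / 2 * P.2)) ^ 4 := by nlinarith [hsq, sq_nonneg ((1 + c22 * a / 2 * P.1 + c13 * b / 2 * P.2) ^ 2 - 1/4)]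
      calc ‖(((1 + c22 * a / 2 * P.1 + c13 * b / 2 * P.2)) ^ 4)⁻¹‖ = (((1 + c22 * a / 2 * P.1 + c13 * b / 2 * P.2)) ^ 4)⁻¹ := by
            rw [Real.norm_eq_abs, abs_of_pos (by positivity)]
      _ ≤ ((16:ℝ)⁻¹)⁻¹ := inv_anti₀ (by norm_num) h16
      _ = 16 * ‖(1:ℝ)‖ := by norm_num
    have g_eq : (fun P : ℝ × ℝ => ‖P‖ ^ 4 * 1) =ᶠ[nhds (0 : ℝ × ℝ)] (fun P : ℝ × ℝ => ‖P‖ ^ 4) := by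
      filter_upwards with P using mul_one _
    refine (hN.mul_isBigO hinv).congr' ?_ g_eq
    filter_upwards [hev] with P hP
    have hpne : ((1 + c22 * a / 2 * P.1 + c13 * b / 2 * P.2)) ≠ 0 := by linarith
    have KI := stmt10_key c40 c31 c22 c13 c04 a b eps alp P.1 P.2 hb2 ha2 halp
    show ((3/2 * a ^ 3 * b ^ 3 * c40 * c13 * c04) * P.1 ^ 0 * P.2 ^ 5 + (3/4 * a * b ^ 4 * c13 ^ 2) * P.1 ^ 1 * P.2 ^ 4 + (3/2 * a ^ 4 * b ^ 2 * c40 * c22 * c04) * P.1 ^ 1 * P.2 ^ 4 + (3/2 * a ^ 2 * b ^ 3 * c22 * c13) * P.1 ^ 2 * P.2 ^ 3 + (3/4 * a ^ 3 * b ^ 2 * c22 ^ 2) * P.1 ^ 3 * P.2 ^ 2 + (3/2 * a ^ 3 * b ^ 2 * c31 * c13) * P.1 ^ 3 * P.2 ^ 2 + (3/2 * a * b ^ 3 * c13) * P.1 ^ 4 * P.2 ^ 1 + (3/2 * a ^ 4 * b * c31 * c22) * P.1 ^ 4 * P.2 ^ 1 + (3/2 * a ^ 2 * b ^ 2 * c22)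 * P.1 ^ 5 * P.2 ^ 0 + (3/4 * a ^ 3 * b ^ 4 * c40 * c13 ^ 2 * c04) * P.1 ^ 0 * P.2 ^ 6 + (1/8 * a * b ^ 5 * c13 ^ 3) * P.1 ^ 1 * P.2 ^ 5 + (3/2 * a ^ 4 * b ^ 3 * c40 * c22 * c13 * c04) * P.1 ^ 1 * P.2 ^ 5 + (3/8 * a ^ 2 * b ^ 4 * c22 * c13 ^ 2) * P.1 ^ 2 * P.2 ^ 4 + (3/4 * a ^ 5 * b ^ 2 * c40 * c22 ^ 2 * c04) * P.1 ^ 2 * P.2 ^ 4 + (3/8 * a ^ 3 * b ^ 3 * c22 ^ 2 * c13) * P.1 ^ 3 * P.2 ^ 3 + (3/4 * a ^ 3 * b ^ 3 * c31 * c13 ^ 2) * P.1 ^ 3 * P.2 ^ 3 + (3/4 * a * b ^ 4 * c13 ^ 2) * P.1 ^ 4 * P.2 ^ 2 + (1/8 * a ^ 4 * b ^ 2 * c22 ^ 3) * P.1 ^ 4 * P.2 ^ 2 + (3/2 * a ^ 4 * b ^ 2 * c31 * c22 * c13) * P.1 ^ 4 * P.2 ^ 2 + (3/2 * a ^ 2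 * b ^ 3 * c22 * c13) * P.1 ^ 5 * P.2 ^ 1 + (3/4 * a ^ 5 * b * c31 * c22 ^ 2) * P.1 ^ 5 * P.2 ^ 1 + (3/4 * a ^ 3 * b ^ 2 * c22 ^ 2) * P.1 ^ 6 * P.2 ^ 0 + (1/8 * a ^ 3 * b ^ 5 * c40 * c13 ^ 3 * c04) * P.1 ^ 0 * P.2 ^ 7 + (3/8 * a ^ 4 * b ^ 4 * c40 * c22 * c13 ^ 2 * c04) * P.1 ^ 1 * P.2 ^ 6 + (3/8 * a ^ 5 * b ^ 3 * c40 * c22 ^ 2 * c13 * c04) * P.1 ^ 2 * P.2 ^ 5 + (1/8 * a ^ 3 * b ^ 4 * c31 * c13 ^ 3) * P.1 ^ 3 * P.2 ^ 4 + (1/8 * a ^ 6 * b ^ 2 * c40 * c22 ^ 3 * c04) * P.1 ^ 3 * P.2 ^ 4 + (1/8 * a * b ^ 5 * c13 ^ 3) * P.1 ^ 4 * P.2 ^ 3 + (3/8 * a ^ 4 * b ^ 3 * c31 * c22 * c13 ^ 2) * P.1 ^ 4 * P.2 ^ 3 + (3/8 * a ^ 2 * b ^ 4 * c22 * c13 ^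 2) * P.1 ^ 5 * P.2 ^ 2 + (3/8 * a ^ 5 * b ^ 2 * c31 * c22 ^ 2 * c13) * P.1 ^ 5 * P.2 ^ 2 + (3/8 * a ^ 3 * b ^ 3 * c22 ^ 2 * c13) * P.1 ^ 6 * P.2 ^ 1 + (1/8 * a ^ 6 * b * c31 * c22 ^ 3) * P.1 ^ 6 * P.2 ^ 1 + (1/8 * a ^ 4 * b ^ 2 * c22 ^ 3) * P.1 ^ 7 * P.2 ^ 0) * (((1 + c22 * a / 2 * P.1 + c13 * b / 2 * P.2)) ^ 4)⁻¹ = a * b ^ 2 * (P.1 * P.2 ^ 2 + P.1 ^ 4 + eps * P.2 ^ 4 + alp * P.1 ^ 3 * P.2) / (1 + c22 * a / 2 * P.1 + c13 * b / 2 * P.2 + 0 * (P.1 * P.2 ^ 2 + P.1 ^ 4 + eps * P.2 ^ 4 + alp * P.1 ^ 3 * P.2)) - (((a * P.1 + 0 * P.2 + 0 * (P.1 * P.2 ^ 2 + P.1 ^ 4 + eps * P.2 ^ 4 + alp * P.1 ^ 3 * P.2)) / (1 + c22 * a / 2 * P.1 + c13 * b / 2 * P.2 + 0 * (P.1 * P.2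 ^ 2 + P.1 ^ 4 + eps * P.2 ^ 4 + alp * P.1 ^ 3 * P.2))) * ((0 * P.1 + b * P.2 + 0 * (P.1 * P.2 ^ 2 + P.1 ^ 4 + eps * P.2 ^ 4 + alp * P.1 ^ 3 * P.2)) / (1 + c22 * a / 2 * P.1 + c13 * b / 2 * P.2 + 0 * (P.1 * P.2 ^ 2 + P.1 ^ 4 + eps * P.2 ^ 4 + alp * P.1 ^ 3 * P.2))) ^ 2 + c40 * ((a * P.1 + 0 * P.2 + 0 * (P.1 * P.2 ^ 2 + P.1 ^ 4 + eps * P.2 ^ 4 + alp * P.1 ^ 3 * P.2)) / (1 + c22 * a / 2 * P.1 + c13 * b / 2 * P.2 + 0 * (P.1 * P.2 ^ 2 + P.1 ^ 4 + eps * P.2 ^ 4 + alp * P.1 ^ 3 * P.2))) ^ 4 + c31 * ((a * P.1 + 0 * P.2 + 0 * (P.1 * P.2 ^ 2 + P.1 ^ 4 + eps * P.2 ^ 4 + alp * P.1 ^ 3 * P.2)) / (1 + c22 * a / 2 * P.1 + c13 * b / 2 * P.2 + 0 * (P.1 * P.2 ^ 2 + P.1 ^ 4 + eps * P.2 ^ 4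 + alp * P.1 ^ 3 * P.2))) ^ 3 * ((0 * P.1 + b * P.2 + 0 * (P.1 * P.2 ^ 2 + P.1 ^ 4 + eps * P.2 ^ 4 + alp * P.1 ^ 3 * P.2)) / (1 + c22 * a / 2 * P.1 + c13 * b / 2 * P.2 + 0 * (P.1 * P.2 ^ 2 + P.1 ^ 4 + eps * P.2 ^ 4 + alp * P.1 ^ 3 * P.2))) + c22 * ((a * P.1 + 0 * P.2 + 0 * (P.1 * P.2 ^ 2 + P.1 ^ 4 + eps * P.2 ^ 4 + alp * P.1 ^ 3 * P.2)) / (1 + c22 * a / 2 * P.1 + c13 * b / 2 * P.2 + 0 * (P.1 * P.2 ^ 2 + P.1 ^ 4 + eps * P.2 ^ 4 + alp * P.1 ^ 3 * P.2))) ^ 2 * ((0 * P.1 + b * P.2 + 0 * (P.1 * P.2 ^ 2 + P.1 ^ 4 + eps * P.2 ^ 4 + alp * P.1 ^ 3 * P.2)) / (1 + c22 * a / 2 * P.1 + c13 * b / 2 * P.2 + 0 * (P.1 * P.2 ^ 2 + P.1 ^ 4 + eps * P.2 ^ 4 + alp * P.1 ^ 3 * P.2))) ^ 2 + c13 * ((a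 * P.1 + 0 * P.2 + 0 * (P.1 * P.2 ^ 2 + P.1 ^ 4 + eps * P.2 ^ 4 + alp * P.1 ^ 3 * P.2)) / (1 + c22 * a / 2 * P.1 + c13 * b / 2 * P.2 + 0 * (P.1 * P.2 ^ 2 + P.1 ^ 4 + eps * P.2 ^ 4 + alp * P.1 ^ 3 * P.2))) * ((0 * P.1 + b * P.2 + 0 * (P.1 * P.2 ^ 2 + P.1 ^ 4 + eps * P.2 ^ 4 + alp * P.1 ^ 3 * P.2)) / (1 + c22 * a / 2 * P.1 + c13 * b / 2 * P.2 + 0 * (P.1 * P.2 ^ 2 + P.1 ^ 4 + eps * P.2 ^ 4 + alp * P.1 ^ 3 * P.2))) ^ 3 + c04 * ((0 * P.1 + b * P.2 + 0 * (P.1 * P.2 ^ 2 + P.1 ^ 4 + eps * P.2 ^ 4 + alp * P.1 ^ 3 * P.2)) / (1 + c22 * a / 2 * P.1 + c13 * b / 2 * P.2 + 0 * (P.1 * P.2 ^ 2 + P.1 ^ 4 + eps * P.2 ^ 4 + alp * P.1 ^ 3 * P.2))) ^ 4)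
    rw [← KI, ← div_eq_mul_inv]
    rw [show (1 + c22 * a / 2 * P.1 + c13 * b / 2 * P.2 + 0 * (P.1 * P.2 ^ 2 + P.1 ^ 4 + eps * P.2 ^ 4 + alp * P.1 ^ 3 * P.2)) = (1 + c22 * a / 2 * P.1 + c13 * b / 2 * P.2) from by ring]
    obtain ⟨D, hD⟩ : ∃ D : ℝ, (1 + c22 * a / 2 * P.1 + c13 * b / 2 * P.2) = D := ⟨_, rfl⟩
    rw [hD] at hpne ⊢
    field_simp [hpne]
    ring
end

section
/- Let c₄₀ be a real number and define f(x,y) = y² + x²y + c₄₀x⁴. Then for all real numbers x̄, ȳ, u, v, with (x, y) = (x̄, −(1/2)x̄² − ȳ), the following exact identity holds: f_yy(x,y)·(x̄u + v)² − 2 f_xy(x,y)·u·(x̄u + v) + f_xx(x,y)·u² = 2·(v² + ((6c₄₀ − 3/2)x̄² − ȳ)u²). That is, under the coordinate change x = x̄, y = −(1/2)x̄² − ȳ (so that dx = dx̄ and dy = −x̄dx̄ − dȳ), the asymptotic binary differential equation f_yy dy² + 2f_xy dx dy + f_xx dx² = 0 of the surface z = f(x,y) is transformed into dȳ² + (−ȳ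 + λx̄²)dx̄² = 0 with λ = 6c₄₀ − 3/2. -/
/-- Partial derivative in the first variable. -/
noncomputable def pdx (f : ℝ × ℝ → ℝ) : ℝ × ℝ → ℝ := fun P => deriv (fun s => f (s, P.2)) P.1

/-- Partial derivative in the second variable. -/
noncomputable def pdy (f : ℝ × ℝ → ℝ) : ℝ × ℝ → ℝ := fun P => deriv (fun t => f (P.1, t)) P.2

theorem pdx_eq_of_hasDerivAt {f g : ℝ × ℝ → ℝ}
    (h : ∀ P : ℝ × ℝ, HasDerivAt (fun s => f (s, P.2)) (g P) P.1) : pdx f = g :=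
  funext fun P => (h P).deriv

theorem pdy_eq_of_hasDerivAt {f g : ℝ × ℝ → ℝ}
    (h : ∀ P : ℝ × ℝ, HasDerivAt (fun t => f (P.1, t)) (g P) P.2) : pdy f = g :=
  funext fun P => (h P).deriv

def cuspMonge (c40 : ℝ) : ℝ × ℝ → ℝ := fun P => P.2 ^ 2 + P.1 ^ 2 * P.2 + c40 * P.1 ^ 4

section
variable (c40 : ℝ)

theorem pdx_cuspMonge : pdx (cuspMonge c40) = fun P => 2 * P.1 * P.2 + 4 * c40 * P.1 ^ 3 :=
  pdx_eq_of_hasDerivAt fun P =>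
    ((((hasDerivAt_pow 2 P.1).mul_const P.2).const_add (P.2 ^ 2)).add
      ((hasDerivAt_pow 4 P.1).const_mul c40)).congr_deriv (by ring)

theorem pdy_cuspMonge : pdy (cuspMonge c40) = fun P => 2 * P.2 + P.1 ^ 2 :=
  pdy_eq_of_hasDerivAt fun P =>
    (((hasDerivAt_pow 2 P.2).add ((hasDerivAt_id P.2).const_mul (P.1 ^ 2))).add_const
      (c40 * P.1 ^ 4)).congr_deriv (by simp)

theorem pdx_pdx_cuspMonge : pdx (pdx (cuspMonge c40)) = fun P => 2 * P.2 + 12 * c40 * P.1 ^ 2 := by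
  rw [pdx_cuspMonge]
  exact pdx_eq_of_hasDerivAt fun P =>
    ((((hasDerivAt_id P.1).const_mul 2).mul_const P.2).add
      ((hasDerivAt_pow 3 P.1).const_mul (4 * c40))).congr_deriv (by simp; ring)

theorem pdy_pdx_cuspMonge : pdy (pdx (cuspMonge c40)) = fun P => 2 * P.1 := by
  rw [pdx_cuspMonge]
  exact pdy_eq_of_hasDerivAt fun P =>
    (((hasDerivAt_id P.2).const_mul (2 * P.1)).add_const (4 * c40 * P.1 ^ 3)).congr_deriv (by simp)

theorem pdy_pdy_cuspMonge : pdy (pdy (cuspMonge c40)) = fun _ => 2 := by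
  rw [pdy_cuspMonge]
  exact pdy_eq_of_hasDerivAt fun P =>
    (((hasDerivAt_id P.2).const_mul 2).add_const (P.1 ^ 2)).congr_deriv (by simp)

end

/-- under the coordinate change `x = x̄`, `y = −(1/2)x̄² − ȳ`, the
asymptotic BDE `f_yy dy² + 2f_xy dx dy + f_xx dx² = 0` of `z = y² + x²y + c₄₀x⁴`
becomes `dȳ² + (−ȳ + λx̄²)dx̄² = 0` with `λ = 6c₄₀ − 3/2`: evaluating the quadratic
form on the transformed direction `(u, −x̄u − v)` gives exactly
`2(v² + ((6c₄₀ − 3/2)x̄² − ȳ)u²)`. -/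
theorem stmt14 (c40 : ℝ) :
    let f : ℝ × ℝ → ℝ := fun P => P.2 ^ 2 + P.1 ^ 2 * P.2 + c40 * P.1 ^ 4
    ∀ xb yb u v : ℝ,
      pdy (pdy f) (xb, -(1 / 2) * xb ^ 2 - yb) * (xb * u + v) ^ 2
        - 2 * pdy (pdx f) (xb, -(1 / 2) * xb ^ 2 - yb) * u * (xb * u + v)
        + pdx (pdx f) (xb, -(1 / 2) * xb ^ 2 - yb) * u ^ 2
      = 2 * (v ^ 2 + ((6 * c40 - 3 / 2) * xb ^ 2 - yb) * u ^ 2) := by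
  intro f xb yb u v
  rw [show f = cuspMonge c40 from rfl, pdy_pdy_cuspMonge, pdy_pdx_cuspMonge, pdx_pdx_cuspMonge]
  ring
end

section
/- Let c_{ij} (4 ≤ i+j ≤ 5) be real numbers and let f : ℝ² → ℝ be a C^∞ function whose 5th-order Taylor polynomial at the origin is xy + x³ + Σ_{4≤i+j≤5} c_{ij}x^i y^j. Then: (1) there is a neighborhood U of the origin and a C^∞ function u : U → ℝ with u(0,0) = 0 such that f_xx(x,y)·u(x,y)² + 2f_xy(x,y)·u(x,y) + f_yy(x,y) = 0 on U; (2) any such u satisfies u(x,y) = −(c₂₂x² + 3c₁₃xy + 6c₀₄y²) + o(‖(x,y)‖²); and (3) the function W(x,y) = f_xxx·u³ + 3f_xxy·u² + 3f_xyy·u + f_yyy (all partial derivatives evaluated at (x,y), u = u(x,y)) satisfies W(x,y) = 6(c₁₃x + 4c₀₄y + c₂₃x² + 4c₁₄xy + 10c₀₅y²) + o(‖(x,y)‖²). In particular, the flecnodal curve {W = 0} of the surface z = f(x,y) near the origin is defined by an equation with expansion c₁₃x + 4c₀₄y + c₂₃x² + 4c₁₄xy + 10c₀₅y² + higher-order terms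 = 0. -/
open Asymptotics

namespace S16

abbrev Sm (h : ℝ × ℝ → ℝ) : Prop := ContDiff ℝ (⊤ : ℕ∞) h

lemma pdx_eq {h : ℝ × ℝ → ℝ} (hh : Sm h) (P : ℝ × ℝ) : pdx h P = fderiv ℝ h P (1, 0) := by
  have hline : HasDerivAt (fun s : ℝ => (s, P.2)) ((1 : ℝ), (0 : ℝ)) P.1 :=
    (hasDerivAt_id P.1).prodMk (hasDerivAt_const _ _)
  have hF : HasFDerivAt h (fderiv ℝ h P) ((P.1, P.2) : ℝ × ℝ) := by
    simpa using (hh.differentiable (by simp) P).hasFDerivAt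
  exact (hF.comp_hasDerivAt P.1 hline).deriv

lemma pdy_eq {h : ℝ × ℝ → ℝ} (hh : Sm h) (P : ℝ × ℝ) : pdy h P = fderiv ℝ h P (0, 1) := by
  have hline : HasDerivAt (fun t : ℝ => (P.1, t)) ((0 : ℝ), (1 : ℝ)) P.2 :=
    (hasDerivAt_const _ _).prodMk (hasDerivAt_id P.2)
  have hF : HasFDerivAt h (fderiv ℝ h P) ((P.1, P.2) : ℝ × ℝ) := by
    simpa using (hh.differentiable (by simp) P).hasFDerivAt
  exact (hF.comp_hasDerivAt P.2 hline).deriv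

lemma sm_pdx {h : ℝ × ℝ → ℝ} (hh : Sm h) : Sm (pdx h) := by
  have : pdx h = fun P => fderiv ℝ h P (1, 0) := funext (pdx_eq hh)
  rw [this]
  exact (hh.fderiv_right (by simp)).clm_apply contDiff_const

lemma sm_pdy {h : ℝ × ℝ → ℝ} (hh : Sm h) : Sm (pdy h) := by
  have : pdy h = fun P => fderiv ℝ h P (0, 1) := funext (pdy_eq hh)
  rw [this]
  exact (hh.fderiv_right (by simp)).clm_apply contDiff_const

lemma fderiv_clm_aux {h : ℝ × ℝ → ℝ} (hh : Sm h) (v w : ℝ × ℝ) (P : ℝ × ℝ) :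
    fderiv ℝ (fun Q => fderiv ℝ h Q v) P w = fderiv ℝ (fderiv ℝ h) P w v := by
  have hd : ContDiff ℝ (⊤ : ℕ∞) (fderiv ℝ h) := hh.fderiv_right (by simp)
  have h1 : HasFDerivAt (fun Q => (ContinuousLinearMap.apply ℝ ℝ v) (fderiv ℝ h Q))
      ((ContinuousLinearMap.apply ℝ ℝ v).comp (fderiv ℝ (fderiv ℝ h) P)) P :=
    (ContinuousLinearMap.apply ℝ ℝ v).hasFDerivAt.comp P (hd.differentiable (by simp) P).hasFDerivAt
  have : (fun Q => fderiv ℝ h Q v) = fun Q => (ContinuousLinearMap.apply ℝ ℝ v) (fderiv ℝ h Q) := rfl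
  rw [this, h1.fderiv]
  rfl

lemma comm {h : ℝ × ℝ → ℝ} (hh : Sm h) : pdx (pdy h) = pdy (pdx h) := by
  funext P
  have hd : ContDiff ℝ (⊤ : ℕ∞) (fderiv ℝ h) := hh.fderiv_right (by simp)
  have hsymm := second_derivative_symmetric_of_eventually (f := h) (f' := fderiv ℝ h)
      (f'' := fderiv ℝ (fderiv ℝ h) P) (x := P)
      (Filter.Eventually.of_forall fun y => (hh.differentiable (by simp) y).hasFDerivAt)
      ((hd.differentiable (by simp) P).hasFDerivAt)
  have e1 : pdy h = fun Q => fderiv ℝ h Q (0, 1) := funext (pdy_eq hh)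
  have e2 : pdx h = fun Q => fderiv ℝ h Q (1, 0) := funext (pdx_eq hh)
  rw [pdx_eq (sm_pdy hh), pdy_eq (sm_pdx hh), e1, e2, fderiv_clm_aux hh _ _ P,
    fderiv_clm_aux hh _ _ P]
  exact hsymm _ _

lemma pdx_add {u v : ℝ × ℝ → ℝ} (hu : Sm u) (hv : Sm v) :
    pdx (fun P => u P + v P) = fun P => pdx u P + pdx v P := by
  funext P
  have du : DifferentiableAt ℝ (fun s : ℝ => u (s, P.2)) P.1 :=
    ((hu.comp ((contDiff_id (E := ℝ)).prodMk contDiff_const)).differentiable (by simp)).differentiableAt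
  have dv : DifferentiableAt ℝ (fun s : ℝ => v (s, P.2)) P.1 :=
    ((hv.comp ((contDiff_id (E := ℝ)).prodMk contDiff_const)).differentiable (by simp)).differentiableAt
  exact deriv_add du dv

lemma pdy_add {u v : ℝ × ℝ → ℝ} (hu : Sm u) (hv : Sm v) :
    pdy (fun P => u P + v P) = fun P => pdy u P + pdy v P := by
  funext P
  have du : DifferentiableAt ℝ (fun t : ℝ => u (P.1, t)) P.2 :=
    ((hu.comp ((contDiff_const (c := P.1)).prodMk (contDiff_id (E := ℝ)))).differentiable (by simp)).differentiableAt
  have dv : DifferentiableAt ℝ (fun t : ℝ => v (P.1, t)) P.2 :=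
    ((hv.comp ((contDiff_const (c := P.1)).prodMk (contDiff_id (E := ℝ)))).differentiable (by simp)).differentiableAt
  exact deriv_add du dv

lemma pdx_cmul (c : ℝ) {u : ℝ × ℝ → ℝ} (hu : Sm u) :
    pdx (fun P => c * u P) = fun P => c * pdx u P := by
  funext P; exact deriv_const_mul c
    (((hu.comp ((contDiff_id (E := ℝ)).prodMk contDiff_const)).differentiable (by simp)).differentiableAt)

lemma pdy_cmul (c : ℝ) {u : ℝ × ℝ → ℝ} (hu : Sm u) :
    pdy (fun P => c * u P) = fun P => c * pdy u P := by
  funext P; exact deriv_const_mul c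
    (((hu.comp ((contDiff_const (c := P.1)).prodMk (contDiff_id (E := ℝ)))).differentiable (by simp)).differentiableAt)

lemma fderiv_decomp {h : ℝ × ℝ → ℝ} (hh : Sm h) (P v : ℝ × ℝ) :
    fderiv ℝ h P v = v.1 * pdx h P + v.2 * pdy h P := by
  have e : fderiv ℝ h P v = fderiv ℝ h P (v.1 • ((1 : ℝ), (0 : ℝ)) + v.2 • ((0 : ℝ), (1 : ℝ))) := by
    congr 1
    simp [Prod.ext_iff]
  rw [pdx_eq hh, pdy_eq hh, e, map_add, map_smul, map_smul, smul_eq_mul, smul_eq_mul]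

lemma hasDerivAt_line {h : ℝ × ℝ → ℝ} (hh : Sm h) (a b t : ℝ) :
    HasDerivAt (fun s : ℝ => h (s * a, s * b))
      (a * pdx h (t * a, t * b) + b * pdy h (t * a, t * b)) t := by
  have hline : HasDerivAt (fun s : ℝ => (s * a, s * b)) ((a : ℝ), (b : ℝ)) t := by
    simpa using ((hasDerivAt_id t).mul_const a).prodMk ((hasDerivAt_id t).mul_const b)
  have hF : HasFDerivAt h (fderiv ℝ h (t * a, t * b)) ((t * a, t * b) : ℝ × ℝ) :=
    (hh.differentiable (by simp) _).hasFDerivAt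
  have := hF.comp_hasDerivAt t hline
  rwa [fderiv_decomp hh] at this



/-- generic MVT step : if `h 0 = 0` and `‖fderiv h‖ = o(‖P‖^n)` then `h = o(‖P‖^(n+1))`. -/
lemma mvt_step {E : Type*} [NormedAddCommGroup E] [NormedSpace ℝ E] {h : E → ℝ}
    (hh : Differentiable ℝ h) (h0 : h 0 = 0) (n : ℕ)
    (hder : (fun P => ‖fderiv ℝ h P‖) =o[nhds (0 : E)] fun P => ‖P‖ ^ n) :
    h =o[nhds (0 : E)] fun P => ‖P‖ ^ (n + 1) := by
  rw [isLittleO_iff]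
  intro c hc
  have h1 := isLittleO_iff.1 hder hc
  rw [Metric.eventually_nhds_iff] at h1 ⊢
  obtain ⟨δ, hδ, hb⟩ := h1
  refine ⟨δ, hδ, fun P hP => ?_⟩
  have hfb : ∀ Q ∈ Metric.closedBall (0 : E) ‖P‖, ‖fderiv ℝ h Q‖ ≤ c * ‖P‖ ^ n := by
    intro Q hQ
    have hQn : ‖Q‖ ≤ ‖P‖ := by simpa using hQ
    have hQδ : dist Q 0 < δ := by
      simp only [dist_zero_right] at hP ⊢
      calc ‖Q‖ ≤ ‖P‖ := hQn
        _ < δ := by simpa [dist_eq_norm] using hP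
    have := hb hQδ
    simp only [norm_norm, norm_pow, norm_norm] at this
    calc ‖fderiv ℝ h Q‖ ≤ c * ‖Q‖ ^ n := by simpa [abs_of_nonneg, norm_nonneg] using this
      _ ≤ c * ‖P‖ ^ n := by
          have := pow_le_pow_left₀ (norm_nonneg Q) hQn n
          nlinarith [pow_nonneg (norm_nonneg Q) n]
  have hP0 : (0 : E) ∈ Metric.closedBall (0 : E) ‖P‖ := by simp
  have hPP : P ∈ Metric.closedBall (0 : E) ‖P‖ := by simp
  have := Convex.norm_image_sub_le_of_norm_fderiv_le
    (fun Q _ => hh.differentiableAt) hfb (convex_closedBall _ _) hP0 hPP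
  rw [h0, sub_zero] at this
  calc ‖h P‖ ≤ c * ‖P‖ ^ n * ‖P - 0‖ := this
    _ = c * ‖P‖ ^ (n + 1) := by rw [sub_zero]; ring
    _ ≤ c * ‖(‖P‖ ^ (n + 1))‖ := by
        rw [Real.norm_eq_abs, abs_of_nonneg (pow_nonneg (norm_nonneg _) _)]

/-- 1D: smooth function with derivative chain vanishing at 0 up to order n is o(t^n). -/
lemma oneD_forward : ∀ (n : ℕ) (φ : ℝ → ℝ), ContDiff ℝ (⊤ : ℕ∞) φ →
    (∀ j ≤ n, iteratedDeriv j φ 0 = 0) → φ =o[nhds (0 : ℝ)] fun t => t ^ n := by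
  intro n
  induction n with
  | zero =>
    intro φ hφ hz
    have h0 : φ 0 = 0 := by simpa using hz 0 le_rfl
    have : Filter.Tendsto φ (nhds 0) (nhds 0) := by
      have := hφ.continuous.tendsto 0
      rwa [h0] at this
    simpa [pow_zero] using (isLittleO_one_iff ℝ).2 this
  | succ n IH =>
    intro φ hφ hz
    have hψ : ContDiff ℝ (⊤ : ℕ∞) (deriv φ) := by
      have : deriv φ = fun t => fderiv ℝ φ t 1 := by
        funext t; rw [fderiv_apply_one_eq_deriv]
      rw [this]
      exact (hφ.fderiv_right (by simp)).clm_apply contDiff_const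
    have hzd : ∀ j ≤ n, iteratedDeriv j (deriv φ) 0 = 0 := by
      intro j hj
      have := hz (j + 1) (by omega)
      rwa [iteratedDeriv_succ'] at this
    have hIH := IH (deriv φ) hψ hzd
    have hder : (fun t : ℝ => ‖fderiv ℝ φ t‖) =o[nhds (0 : ℝ)] fun t => ‖t‖ ^ n := by
      have hO : (fun t : ℝ => ‖fderiv ℝ φ t‖) =O[nhds (0 : ℝ)] deriv φ := by
        rw [isBigO_iff]
        refine ⟨1, Filter.Eventually.of_forall fun t => ?_⟩
        rw [one_mul, norm_norm]
        refine ContinuousLinearMap.opNorm_le_bound _ (norm_nonneg _) fun v => ?_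
        have : fderiv ℝ φ t v = v * deriv φ t := by
          calc fderiv ℝ φ t v = fderiv ℝ φ t (v • 1) := by norm_num
            _ = v • fderiv ℝ φ t 1 := by rw [map_smul]
            _ = v * deriv φ t := by rw [fderiv_apply_one_eq_deriv]; rfl
        rw [this, norm_mul]
        exact le_of_eq (mul_comm _ _)
      exact hO.trans_isLittleO (hIH.norm_right.congr_right fun t => norm_pow t n)
    have h0 : φ 0 = 0 := by simpa using hz 0 (by omega)
    have := mvt_step (hφ.differentiable (by simp)) h0 n hder
    exact (this.congr_right fun t => (norm_pow t (n + 1)).symm).of_norm_right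

lemma sm_deriv1 {φ : ℝ → ℝ} (hφ : ContDiff ℝ (⊤ : ℕ∞) φ) : ContDiff ℝ (⊤ : ℕ∞) (deriv φ) := by
  have : deriv φ = fun t => fderiv ℝ φ t 1 := by funext t; rw [fderiv_apply_one_eq_deriv]
  rw [this]
  exact (hφ.fderiv_right (by simp)).clm_apply contDiff_const

lemma it_sub {u v : ℝ → ℝ} (hu : ContDiff ℝ (⊤ : ℕ∞) u) (hv : ContDiff ℝ (⊤ : ℕ∞) v) (i : ℕ) :
    iteratedDeriv i (fun t => u t - v t) 0 = iteratedDeriv i u 0 - iteratedDeriv i v 0 := by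
  rw [← iteratedDerivWithin_univ, ← iteratedDerivWithin_univ, ← iteratedDerivWithin_univ]
  exact iteratedDerivWithin_sub (Set.mem_univ 0) uniqueDiffOn_univ
    ((hu.of_le (by exact_mod_cast le_top)).contDiffWithinAt) ((hv.of_le (by exact_mod_cast le_top)).contDiffWithinAt)

lemma deriv_monomial (c : ℝ) (j : ℕ) :
    deriv (fun t : ℝ => c * t ^ (j + 1)) = fun t : ℝ => (c * (j + 1)) * t ^ j := by
  funext t
  rw [((hasDerivAt_pow (j + 1) t).const_mul c).deriv]
  push_cast
  ring_nf

lemma mono_ider_lt : ∀ (i j : ℕ) (c : ℝ), i < j → iteratedDeriv i (fun t : ℝ => c * t ^ j) 0 = 0 := by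
  intro i
  induction i with
  | zero =>
    intro j c hj
    rw [iteratedDeriv_zero]
    simp [zero_pow (by omega : j ≠ 0)]
  | succ i IH =>
    intro j c hj
    obtain ⟨j', rfl⟩ : ∃ j', j = j' + 1 := ⟨j - 1, by omega⟩
    rw [iteratedDeriv_succ', deriv_monomial]
    exact IH j' (c * (j' + 1)) (by omega)

lemma mono_ider_eq : ∀ (j : ℕ) (c : ℝ), iteratedDeriv j (fun t : ℝ => c * t ^ j) 0 = c * j.factorial := by
  intro j
  induction j with
  | zero => intro c; rw [iteratedDeriv_zero]; simp
  | succ j IH =>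
    intro c
    rw [iteratedDeriv_succ', deriv_monomial, IH]
    rw [Nat.factorial_succ]
    push_cast
    ring

lemma pow_isBigO_pow {j n : ℕ} (hj : j ≤ n) :
    (fun t : ℝ => t ^ n) =O[nhds (0 : ℝ)] fun t => t ^ j := by
  rw [isBigO_iff]
  refine ⟨1, ?_⟩
  rw [Metric.eventually_nhds_iff]
  refine ⟨1, one_pos, fun t ht => ?_⟩
  rw [one_mul, Real.norm_eq_abs, Real.norm_eq_abs, abs_pow, abs_pow]
  exact pow_le_pow_of_le_one (abs_nonneg t) (by simpa [Real.dist_eq] using ht.le) hj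

lemma oneD_backward (n : ℕ) (φ : ℝ → ℝ) (hφ : ContDiff ℝ (⊤ : ℕ∞) φ)
    (h : φ =o[nhds (0 : ℝ)] fun t => t ^ n) : ∀ j, j ≤ n → iteratedDeriv j φ 0 = 0 := by
  intro j
  induction j using Nat.strong_induction_on with
  | _ j IH =>
    intro hj
    set L := iteratedDeriv j φ 0 with hL
    have hρsm : ContDiff ℝ (⊤ : ℕ∞) (fun t : ℝ => φ t - (L / j.factorial) * t ^ j) :=
      hφ.sub (contDiff_const.mul (contDiff_id.pow j))
    have hmsm : ContDiff ℝ (⊤ : ℕ∞) (fun t : ℝ => (L / j.factorial) * t ^ j) :=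
      contDiff_const.mul (contDiff_id.pow j)
    have hvals : ∀ i ≤ j, iteratedDeriv i (fun t : ℝ => φ t - (L / j.factorial) * t ^ j) 0 = 0 := by
      intro i hi
      rw [it_sub hφ hmsm]
      rcases eq_or_lt_of_le hi with heq | hlt
      · subst heq
        rw [mono_ider_eq, ← hL]
        have hne : (Nat.factorial i : ℝ) ≠ 0 := Nat.cast_ne_zero.2 (Nat.factorial_pos i).ne'
        field_simp
        ring
      · rw [IH i hlt (le_trans hlt.le hj), mono_ider_lt i j _ hlt, sub_zero]
    have hρo := oneD_forward j _ hρsm hvals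
    have hφj : φ =o[nhds (0 : ℝ)] fun t => t ^ j := h.trans_isBigO (pow_isBigO_pow hj)
    have hmono : (fun t : ℝ => (L / j.factorial) * t ^ j) =o[nhds (0 : ℝ)] fun t => t ^ j := by
      have := hφj.sub hρo
      refine this.congr_left fun t => by ring
    by_contra hL0
    have hc : (0 : ℝ) < |L / j.factorial| / 2 := by
      have h2 : (Nat.factorial j : ℝ) ≠ 0 := Nat.cast_ne_zero.2 (Nat.factorial_pos j).ne'
      have : L / (Nat.factorial j : ℝ) ≠ 0 := div_ne_zero (by rwa [hL] at hL0) h2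
      positivity
    have := isLittleO_iff.1 hmono hc
    rw [Metric.eventually_nhds_iff] at this
    obtain ⟨δ, hδ, hb⟩ := this
    have ht : dist (δ / 2) (0 : ℝ) < δ := by
      rw [Real.dist_eq, sub_zero, abs_of_pos (by linarith)]
      linarith
    have := hb ht
    rw [Real.norm_eq_abs, Real.norm_eq_abs, abs_mul, abs_pow] at this
    have hpow : 0 < |δ / 2| ^ j := pow_pos (abs_pos.2 (by positivity : (0:ℝ) < δ/2).ne') j
    nlinarith [abs_nonneg (L / (j.factorial : ℝ))]

lemma o_base {h : ℝ × ℝ → ℝ} (hh : Sm h) (h0 : h 0 = 0) :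
    h =o[nhds (0 : ℝ × ℝ)] fun P : ℝ × ℝ => ‖P‖ ^ 0 := by
  have ht : Filter.Tendsto h (nhds 0) (nhds 0) := by
    have := hh.continuous.tendsto 0; rwa [h0] at this
  simpa [pow_zero] using (isLittleO_one_iff ℝ).2 ht

lemma step2D {h : ℝ × ℝ → ℝ} (hh : Sm h) (h0 : h 0 = 0) (n : ℕ)
    (hx : pdx h =o[nhds (0 : ℝ × ℝ)] fun P : ℝ × ℝ => ‖P‖ ^ n)
    (hy : pdy h =o[nhds (0 : ℝ × ℝ)] fun P : ℝ × ℝ => ‖P‖ ^ n) :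
    h =o[nhds (0 : ℝ × ℝ)] fun P : ℝ × ℝ => ‖P‖ ^ (n + 1) := by
  apply mvt_step (hh.differentiable (by simp)) h0 n
  have hO : (fun P : ℝ × ℝ => ‖fderiv ℝ h P‖) =O[nhds (0 : ℝ × ℝ)]
      fun P => |pdx h P| + |pdy h P| := by
    rw [isBigO_iff]
    refine ⟨1, Filter.Eventually.of_forall fun P => ?_⟩
    rw [one_mul, norm_norm]
    have hb : ‖fderiv ℝ h P‖ ≤ |pdx h P| + |pdy h P| := by
      refine ContinuousLinearMap.opNorm_le_bound _ (by positivity) fun v => ?_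
      rw [fderiv_decomp hh]
      have h1 : |v.1| ≤ ‖v‖ := by rw [← Real.norm_eq_abs]; exact norm_fst_le v
      have h2 : |v.2| ≤ ‖v‖ := by rw [← Real.norm_eq_abs]; exact norm_snd_le v
      calc ‖v.1 * pdx h P + v.2 * pdy h P‖ ≤ |v.1 * pdx h P| + |v.2 * pdy h P| := abs_add_le _ _
        _ = |v.1| * |pdx h P| + |v.2| * |pdy h P| := by rw [abs_mul, abs_mul]
        _ ≤ ‖v‖ * |pdx h P| + ‖v‖ * |pdy h P| := by
            nlinarith [mul_le_mul_of_nonneg_right h1 (abs_nonneg (pdx h P)),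
              mul_le_mul_of_nonneg_right h2 (abs_nonneg (pdy h P))]
        _ = (|pdx h P| + |pdy h P|) * ‖v‖ := by ring
    calc ‖fderiv ℝ h P‖ ≤ |pdx h P| + |pdy h P| := hb
      _ ≤ ‖|pdx h P| + |pdy h P|‖ := le_abs_self _
  exact hO.trans_isLittleO (hx.abs_left.add hy.abs_left)

lemma forward2 {h : ℝ × ℝ → ℝ} (hh : Sm h) (v00 : h 0 = 0)
    (v10 : pdx h 0 = 0) (v01 : pdy h 0 = 0)
    (v20 : pdx (pdx h) 0 = 0) (v11a : pdy (pdx h) 0 = 0)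
    (v11b : pdx (pdy h) 0 = 0) (v02 : pdy (pdy h) 0 = 0) :
    h =o[nhds (0 : ℝ × ℝ)] fun P : ℝ × ℝ => ‖P‖ ^ 2 := by
  have ox : pdx h =o[nhds (0 : ℝ × ℝ)] fun P : ℝ × ℝ => ‖P‖ ^ 1 :=
    step2D (sm_pdx hh) v10 0 (o_base (sm_pdx (sm_pdx hh)) v20) (o_base (sm_pdy (sm_pdx hh)) v11a)
  have oy : pdy h =o[nhds (0 : ℝ × ℝ)] fun P : ℝ × ℝ => ‖P‖ ^ 1 :=
    step2D (sm_pdy hh) v01 0 (o_base (sm_pdx (sm_pdy hh)) v11b) (o_base (sm_pdy (sm_pdy hh)) v02)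
  exact step2D hh v00 1 ox oy

lemma pdx_comb2 (c₁ c₂ : ℝ) {u₁ u₂ : ℝ × ℝ → ℝ} (h₁ : Sm u₁) (h₂ : Sm u₂) :
    pdx (fun P => c₁ * u₁ P + c₂ * u₂ P) = fun P => c₁ * pdx u₁ P + c₂ * pdx u₂ P := by
  rw [pdx_add (contDiff_const.mul h₁) (contDiff_const.mul h₂)]
  simp only [pdx_cmul c₁ h₁, pdx_cmul c₂ h₂]

lemma pdy_comb2 (c₁ c₂ : ℝ) {u₁ u₂ : ℝ × ℝ → ℝ} (h₁ : Sm u₁) (h₂ : Sm u₂) :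
    pdy (fun P => c₁ * u₁ P + c₂ * u₂ P) = fun P => c₁ * pdy u₁ P + c₂ * pdy u₂ P := by
  rw [pdy_add (contDiff_const.mul h₁) (contDiff_const.mul h₂)]
  simp only [pdy_cmul c₁ h₁, pdy_cmul c₂ h₂]

lemma pdx_comb3 (c₁ c₂ c₃ : ℝ) {u₁ u₂ u₃ : ℝ × ℝ → ℝ} (h₁ : Sm u₁) (h₂ : Sm u₂) (h₃ : Sm u₃) :
    pdx (fun P => c₁ * u₁ P + c₂ * u₂ P + c₃ * u₃ P)
      = fun P => c₁ * pdx u₁ P + c₂ * pdx u₂ P + c₃ * pdx u₃ P := by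
  rw [pdx_add ((contDiff_const.mul h₁).add (contDiff_const.mul h₂)) (contDiff_const.mul h₃)]
  simp only [pdx_comb2 c₁ c₂ h₁ h₂, pdx_cmul c₃ h₃]

lemma pdy_comb3 (c₁ c₂ c₃ : ℝ) {u₁ u₂ u₃ : ℝ × ℝ → ℝ} (h₁ : Sm u₁) (h₂ : Sm u₂) (h₃ : Sm u₃) :
    pdy (fun P => c₁ * u₁ P + c₂ * u₂ P + c₃ * u₃ P)
      = fun P => c₁ * pdy u₁ P + c₂ * pdy u₂ P + c₃ * pdy u₃ P := by
  rw [pdy_add ((contDiff_const.mul h₁).add (contDiff_const.mul h₂)) (contDiff_const.mul h₃)]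
  simp only [pdy_comb2 c₁ c₂ h₁ h₂, pdy_cmul c₃ h₃]

lemma pdx_comb4 (c₁ c₂ c₃ c₄ : ℝ) {u₁ u₂ u₃ u₄ : ℝ × ℝ → ℝ}
    (h₁ : Sm u₁) (h₂ : Sm u₂) (h₃ : Sm u₃) (h₄ : Sm u₄) :
    pdx (fun P => c₁ * u₁ P + c₂ * u₂ P + c₃ * u₃ P + c₄ * u₄ P)
      = fun P => c₁ * pdx u₁ P + c₂ * pdx u₂ P + c₃ * pdx u₃ P + c₄ * pdx u₄ P := by
  rw [pdx_add (((contDiff_const.mul h₁).add (contDiff_const.mul h₂)).add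
    (contDiff_const.mul h₃)) (contDiff_const.mul h₄)]
  simp only [pdx_comb3 c₁ c₂ c₃ h₁ h₂ h₃, pdx_cmul c₄ h₄]

lemma pdy_comb4 (c₁ c₂ c₃ c₄ : ℝ) {u₁ u₂ u₃ u₄ : ℝ × ℝ → ℝ}
    (h₁ : Sm u₁) (h₂ : Sm u₂) (h₃ : Sm u₃) (h₄ : Sm u₄) :
    pdy (fun P => c₁ * u₁ P + c₂ * u₂ P + c₃ * u₃ P + c₄ * u₄ P)
      = fun P => c₁ * pdy u₁ P + c₂ * pdy u₂ P + c₃ * pdy u₃ P + c₄ * pdy u₄ P := by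
  rw [pdy_add (((contDiff_const.mul h₁).add (contDiff_const.mul h₂)).add
    (contDiff_const.mul h₃)) (contDiff_const.mul h₄)]
  simp only [pdy_comb3 c₁ c₂ c₃ h₁ h₂ h₃, pdy_cmul c₄ h₄]

lemma pdx_comb5 (c₁ c₂ c₃ c₄ c₅ : ℝ) {u₁ u₂ u₃ u₄ u₅ : ℝ × ℝ → ℝ}
    (h₁ : Sm u₁) (h₂ : Sm u₂) (h₃ : Sm u₃) (h₄ : Sm u₄) (h₅ : Sm u₅) :
    pdx (fun P => c₁ * u₁ P + c₂ * u₂ P + c₃ * u₃ P + c₄ * u₄ P + c₅ * u₅ P)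
      = fun P => c₁ * pdx u₁ P + c₂ * pdx u₂ P + c₃ * pdx u₃ P + c₄ * pdx u₄ P + c₅ * pdx u₅ P := by
  rw [pdx_add ((((contDiff_const.mul h₁).add (contDiff_const.mul h₂)).add
    (contDiff_const.mul h₃)).add (contDiff_const.mul h₄)) (contDiff_const.mul h₅)]
  simp only [pdx_comb4 c₁ c₂ c₃ c₄ h₁ h₂ h₃ h₄, pdx_cmul c₅ h₅]

lemma pdy_comb5 (c₁ c₂ c₃ c₄ c₅ : ℝ) {u₁ u₂ u₃ u₄ u₅ : ℝ × ℝ → ℝ}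
    (h₁ : Sm u₁) (h₂ : Sm u₂) (h₃ : Sm u₃) (h₄ : Sm u₄) (h₅ : Sm u₅) :
    pdy (fun P => c₁ * u₁ P + c₂ * u₂ P + c₃ * u₃ P + c₄ * u₄ P + c₅ * u₅ P)
      = fun P => c₁ * pdy u₁ P + c₂ * pdy u₂ P + c₃ * pdy u₃ P + c₄ * pdy u₄ P + c₅ * pdy u₅ P := by
  rw [pdy_add ((((contDiff_const.mul h₁).add (contDiff_const.mul h₂)).add
    (contDiff_const.mul h₃)).add (contDiff_const.mul h₄)) (contDiff_const.mul h₅)]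
  simp only [pdy_comb4 c₁ c₂ c₃ c₄ h₁ h₂ h₃ h₄, pdy_cmul c₅ h₅]



variable {g : ℝ × ℝ → ℝ}

lemma y10 (hg : Sm g) : pdy (pdx g) = pdx (pdy g) := (comm hg).symm

lemma y20 (hg : Sm g) : pdy (pdx (pdx g)) = pdx (pdx (pdy g)) := by
  calc pdy (pdx (pdx g)) = pdx (pdy (pdx g)) := (comm (sm_pdx hg)).symm
    _ = pdx (pdx (pdy g)) := by rw [y10 hg]

lemma y11 (hg : Sm g) : pdy (pdx (pdy g)) = pdx (pdy (pdy g)) := (comm (sm_pdy hg)).symm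

lemma y30 (hg : Sm g) : pdy (pdx (pdx (pdx g))) = pdx (pdx (pdx (pdy g))) := by
  calc pdy (pdx (pdx (pdx g))) = pdx (pdy (pdx (pdx g))) := (comm (sm_pdx (sm_pdx hg))).symm
    _ = _ := by rw [y20 hg]

lemma y21 (hg : Sm g) : pdy (pdx (pdx (pdy g))) = pdx (pdx (pdy (pdy g))) := by
  calc pdy (pdx (pdx (pdy g))) = pdx (pdy (pdx (pdy g))) := (comm (sm_pdx (sm_pdy hg))).symm
    _ = _ := by rw [y11 hg]

lemma y12 (hg : Sm g) : pdy (pdx (pdy (pdy g))) = pdx (pdy (pdy (pdy g))) :=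
  (comm (sm_pdy (sm_pdy hg))).symm

lemma y40 (hg : Sm g) : pdy (pdx (pdx (pdx (pdx g)))) = pdx (pdx (pdx (pdx (pdy g)))) := by
  calc pdy (pdx (pdx (pdx (pdx g)))) = pdx (pdy (pdx (pdx (pdx g)))) :=
        (comm (sm_pdx (sm_pdx (sm_pdx hg)))).symm
    _ = _ := by rw [y30 hg]

lemma y31 (hg : Sm g) : pdy (pdx (pdx (pdx (pdy g)))) = pdx (pdx (pdx (pdy (pdy g)))) := by
  calc pdy (pdx (pdx (pdx (pdy g)))) = pdx (pdy (pdx (pdx (pdy g)))) :=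
        (comm (sm_pdx (sm_pdx (sm_pdy hg)))).symm
    _ = _ := by rw [y21 hg]

lemma y22 (hg : Sm g) : pdy (pdx (pdx (pdy (pdy g)))) = pdx (pdx (pdy (pdy (pdy g)))) := by
  calc pdy (pdx (pdx (pdy (pdy g)))) = pdx (pdy (pdx (pdy (pdy g)))) :=
        (comm (sm_pdx (sm_pdy (sm_pdy hg)))).symm
    _ = _ := by rw [y12 hg]

lemma y13 (hg : Sm g) : pdy (pdx (pdy (pdy (pdy g)))) = pdx (pdy (pdy (pdy (pdy g)))) :=
  (comm (sm_pdy (sm_pdy (sm_pdy hg)))).symm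

open Asymptotics in
lemma diag (hg : Sm g) (ho : g =o[nhds (0 : ℝ × ℝ)] fun P : ℝ × ℝ => ‖P‖ ^ 5) (a b : ℝ) :
    (a^2 * pdx (pdx g) 0 + 2*a*b * pdx (pdy g) 0 + b^2 * pdy (pdy g) 0 = 0) ∧
    (a^3 * pdx (pdx (pdx g)) 0 + 3*a^2*b * pdx (pdx (pdy g)) 0
      + 3*a*b^2 * pdx (pdy (pdy g)) 0 + b^3 * pdy (pdy (pdy g)) 0 = 0) ∧
    (a^4 * pdx (pdx (pdx (pdx g))) 0 + 4*a^3*b * pdx (pdx (pdx (pdy g))) 0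
      + 6*a^2*b^2 * pdx (pdx (pdy (pdy g))) 0 + 4*a*b^3 * pdx (pdy (pdy (pdy g))) 0
      + b^4 * pdy (pdy (pdy (pdy g))) 0 = 0) ∧
    (a^5 * pdx (pdx (pdx (pdx (pdx g)))) 0 + 5*a^4*b * pdx (pdx (pdx (pdx (pdy g)))) 0
      + 10*a^3*b^2 * pdx (pdx (pdx (pdy (pdy g)))) 0 + 10*a^2*b^3 * pdx (pdx (pdy (pdy (pdy g)))) 0
      + 5*a*b^4 * pdx (pdy (pdy (pdy (pdy g)))) 0 + b^5 * pdy (pdy (pdy (pdy (pdy g)))) 0 = 0) := by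
  have sx := sm_pdx hg
  have sy := sm_pdy hg
  have sxx := sm_pdx sx
  have sxy := sm_pdx sy
  have syy := sm_pdy sy
  have sxxx := sm_pdx sxx
  have sxxy := sm_pdx sxy
  have sxyy := sm_pdx syy
  have syyy := sm_pdy syy
  have sxxxx := sm_pdx sxxx
  have sxxxy := sm_pdx sxxy
  have sxxyy := sm_pdx sxyy
  have sxyyy := sm_pdx syyy
  have syyyy := sm_pdy syyy
  have hψsm : ContDiff ℝ (⊤ : ℕ∞) (fun t : ℝ => g (t*a, t*b)) :=
    hg.comp (((contDiff_id (E := ℝ)).mul contDiff_const).prodMk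
      ((contDiff_id (E := ℝ)).mul contDiff_const))
  have hψo : (fun t : ℝ => g (t*a, t*b)) =o[nhds (0 : ℝ)] fun t => t ^ 5 := by
    have hc : Continuous fun t : ℝ => ((t*a, t*b) : ℝ × ℝ) :=
      (continuous_id.mul continuous_const).prodMk (continuous_id.mul continuous_const)
    have hl : Filter.Tendsto (fun t : ℝ => ((t*a, t*b) : ℝ × ℝ)) (nhds 0) (nhds 0) := by
      have := hc.tendsto 0
      rw [← Prod.mk_zero_zero]
      simpa using this
    have h1 := ho.comp_tendsto hl
    refine IsLittleO.trans_isBigO h1 ?_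
    rw [isBigO_iff]
    refine ⟨(|a| + |b|) ^ 5, Filter.Eventually.of_forall fun t => ?_⟩
    have hn : ‖((t*a, t*b) : ℝ × ℝ)‖ ≤ (|a| + |b|) * |t| := by
      rw [Prod.norm_def]
      apply max_le
      · rw [Real.norm_eq_abs, abs_mul]
        nlinarith [abs_nonneg t, abs_nonneg a, abs_nonneg b]
      · rw [Real.norm_eq_abs, abs_mul]
        nlinarith [abs_nonneg t, abs_nonneg a, abs_nonneg b]
    have h5 : ‖((t*a, t*b) : ℝ × ℝ)‖ ^ 5 ≤ ((|a| + |b|) * |t|) ^ 5 :=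
      pow_le_pow_left₀ (norm_nonneg _) hn 5
    calc ‖(fun P : ℝ × ℝ => ‖P‖ ^ 5) ((t*a, t*b) : ℝ × ℝ)‖
        = ‖((t*a, t*b) : ℝ × ℝ)‖ ^ 5 := by
          rw [Real.norm_eq_abs, abs_of_nonneg (pow_nonneg (norm_nonneg _) _)]
      _ ≤ ((|a| + |b|) * |t|) ^ 5 := h5
      _ = (|a| + |b|) ^ 5 * ‖t ^ 5‖ := by
          rw [mul_pow, norm_pow, Real.norm_eq_abs]
  have d0 : deriv (fun t : ℝ => g (t*a, t*b))
      = fun t => a * pdx g (t*a, t*b) + b * pdy g (t*a, t*b) :=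
    funext fun t => (hasDerivAt_line hg a b t).deriv
  have d1 : deriv (fun t : ℝ => a * pdx g (t*a, t*b) + b * pdy g (t*a, t*b))
      = fun t => a^2 * pdx (pdx g) (t*a, t*b) + 2*a*b * pdx (pdy g) (t*a, t*b)
          + b^2 * pdy (pdy g) (t*a, t*b) := by
    funext t
    have h := (hasDerivAt_line (h := fun P => a * pdx g P + b * pdy g P)
      ((contDiff_const.mul sx).add (contDiff_const.mul sy)) a b t).deriv
    rw [pdx_comb2 a b sx sy, pdy_comb2 a b sx sy, y10 hg] at h
    exact h.trans (by ring)
  have d2 : deriv (fun t : ℝ => a^2 * pdx (pdx g) (t*a, t*b) + 2*a*b * pdx (pdy g) (t*a, t*b)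
          + b^2 * pdy (pdy g) (t*a, t*b))
      = fun t => a^3 * pdx (pdx (pdx g)) (t*a, t*b) + 3*a^2*b * pdx (pdx (pdy g)) (t*a, t*b)
          + 3*a*b^2 * pdx (pdy (pdy g)) (t*a, t*b) + b^3 * pdy (pdy (pdy g)) (t*a, t*b) := by
    funext t
    have h := (hasDerivAt_line
      (h := fun P => a^2 * pdx (pdx g) P + 2*a*b * pdx (pdy g) P + b^2 * pdy (pdy g) P)
      (((contDiff_const.mul sxx).add (contDiff_const.mul sxy)).add (contDiff_const.mul syy))
      a b t).deriv
    rw [pdx_comb3 (a^2) (2*a*b) (b^2) sxx sxy syy, pdy_comb3 (a^2) (2*a*b) (b^2) sxx sxy syy,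
      y20 hg, y11 hg] at h
    exact h.trans (by ring)
  have d3 : deriv (fun t : ℝ => a^3 * pdx (pdx (pdx g)) (t*a, t*b)
          + 3*a^2*b * pdx (pdx (pdy g)) (t*a, t*b)
          + 3*a*b^2 * pdx (pdy (pdy g)) (t*a, t*b) + b^3 * pdy (pdy (pdy g)) (t*a, t*b))
      = fun t => a^4 * pdx (pdx (pdx (pdx g))) (t*a, t*b)
          + 4*a^3*b * pdx (pdx (pdx (pdy g))) (t*a, t*b)
          + 6*a^2*b^2 * pdx (pdx (pdy (pdy g))) (t*a, t*b)
          + 4*a*b^3 * pdx (pdy (pdy (pdy g))) (t*a, t*b)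
          + b^4 * pdy (pdy (pdy (pdy g))) (t*a, t*b) := by
    funext t
    have h := (hasDerivAt_line
      (h := fun P => a^3 * pdx (pdx (pdx g)) P + 3*a^2*b * pdx (pdx (pdy g)) P
        + 3*a*b^2 * pdx (pdy (pdy g)) P + b^3 * pdy (pdy (pdy g)) P)
      ((((contDiff_const.mul sxxx).add (contDiff_const.mul sxxy)).add
        (contDiff_const.mul sxyy)).add (contDiff_const.mul syyy))
      a b t).deriv
    rw [pdx_comb4 (a^3) (3*a^2*b) (3*a*b^2) (b^3) sxxx sxxy sxyy syyy,
      pdy_comb4 (a^3) (3*a^2*b) (3*a*b^2) (b^3) sxxx sxxy sxyy syyy,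
      y30 hg, y21 hg, y12 hg] at h
    exact h.trans (by ring)
  have d4 : deriv (fun t : ℝ => a^4 * pdx (pdx (pdx (pdx g))) (t*a, t*b)
          + 4*a^3*b * pdx (pdx (pdx (pdy g))) (t*a, t*b)
          + 6*a^2*b^2 * pdx (pdx (pdy (pdy g))) (t*a, t*b)
          + 4*a*b^3 * pdx (pdy (pdy (pdy g))) (t*a, t*b)
          + b^4 * pdy (pdy (pdy (pdy g))) (t*a, t*b))
      = fun t => a^5 * pdx (pdx (pdx (pdx (pdx g)))) (t*a, t*b)
          + 5*a^4*b * pdx (pdx (pdx (pdx (pdy g)))) (t*a, t*b)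
          + 10*a^3*b^2 * pdx (pdx (pdx (pdy (pdy g)))) (t*a, t*b)
          + 10*a^2*b^3 * pdx (pdx (pdy (pdy (pdy g)))) (t*a, t*b)
          + 5*a*b^4 * pdx (pdy (pdy (pdy (pdy g)))) (t*a, t*b)
          + b^5 * pdy (pdy (pdy (pdy (pdy g)))) (t*a, t*b) := by
    funext t
    have h := (hasDerivAt_line
      (h := fun P => a^4 * pdx (pdx (pdx (pdx g))) P + 4*a^3*b * pdx (pdx (pdx (pdy g))) P
        + 6*a^2*b^2 * pdx (pdx (pdy (pdy g))) P + 4*a*b^3 * pdx (pdy (pdy (pdy g))) P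
        + b^4 * pdy (pdy (pdy (pdy g))) P)
      (((((contDiff_const.mul sxxxx).add (contDiff_const.mul sxxxy)).add
        (contDiff_const.mul sxxyy)).add (contDiff_const.mul sxyyy)).add
        (contDiff_const.mul syyyy))
      a b t).deriv
    rw [pdx_comb5 (a^4) (4*a^3*b) (6*a^2*b^2) (4*a*b^3) (b^4) sxxxx sxxxy sxxyy sxyyy syyyy,
      pdy_comb5 (a^4) (4*a^3*b) (6*a^2*b^2) (4*a*b^3) (b^4) sxxxx sxxxy sxxyy sxyyy syyyy,
      y40 hg, y31 hg, y22 hg, y13 hg] at h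
    exact h.trans (by ring)
  have hit := oneD_backward 5 _ hψsm hψo
  have i1 : iteratedDeriv 1 (fun t : ℝ => g (t*a, t*b))
      = fun t => a * pdx g (t*a, t*b) + b * pdy g (t*a, t*b) := by
    rw [iteratedDeriv_one, d0]
  have i2 : iteratedDeriv 2 (fun t : ℝ => g (t*a, t*b))
      = fun t => a^2 * pdx (pdx g) (t*a, t*b) + 2*a*b * pdx (pdy g) (t*a, t*b)
          + b^2 * pdy (pdy g) (t*a, t*b) := by
    conv_lhs => rw [show (2:ℕ) = 1 + 1 from rfl, iteratedDeriv_succ, i1, d1]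
  have i3 : iteratedDeriv 3 (fun t : ℝ => g (t*a, t*b))
      = fun t => a^3 * pdx (pdx (pdx g)) (t*a, t*b) + 3*a^2*b * pdx (pdx (pdy g)) (t*a, t*b)
          + 3*a*b^2 * pdx (pdy (pdy g)) (t*a, t*b) + b^3 * pdy (pdy (pdy g)) (t*a, t*b) := by
    conv_lhs => rw [show (3:ℕ) = 2 + 1 from rfl, iteratedDeriv_succ, i2, d2]
  have i4 : iteratedDeriv 4 (fun t : ℝ => g (t*a, t*b))
      = fun t => a^4 * pdx (pdx (pdx (pdx g))) (t*a, t*b)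
          + 4*a^3*b * pdx (pdx (pdx (pdy g))) (t*a, t*b)
          + 6*a^2*b^2 * pdx (pdx (pdy (pdy g))) (t*a, t*b)
          + 4*a*b^3 * pdx (pdy (pdy (pdy g))) (t*a, t*b)
          + b^4 * pdy (pdy (pdy (pdy g))) (t*a, t*b) := by
    conv_lhs => rw [show (4:ℕ) = 3 + 1 from rfl, iteratedDeriv_succ, i3, d3]
  have i5 : iteratedDeriv 5 (fun t : ℝ => g (t*a, t*b))
      = fun t => a^5 * pdx (pdx (pdx (pdx (pdx g)))) (t*a, t*b)
          + 5*a^4*b * pdx (pdx (pdx (pdx (pdy g)))) (t*a, t*b)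
          + 10*a^3*b^2 * pdx (pdx (pdx (pdy (pdy g)))) (t*a, t*b)
          + 10*a^2*b^3 * pdx (pdx (pdy (pdy (pdy g)))) (t*a, t*b)
          + 5*a*b^4 * pdx (pdy (pdy (pdy (pdy g)))) (t*a, t*b)
          + b^5 * pdy (pdy (pdy (pdy (pdy g)))) (t*a, t*b) := by
    conv_lhs => rw [show (5:ℕ) = 4 + 1 from rfl, iteratedDeriv_succ, i4, d4]
  have h2 := hit 2 (by norm_num)
  have h3 := hit 3 (by norm_num)
  have h4 := hit 4 (by norm_num)
  have h5 := hit 5 (by norm_num)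
  rw [i2] at h2
  rw [i3] at h3
  rw [i4] at h4
  rw [i5] at h5
  simp only [zero_mul, Prod.mk_zero_zero] at h2 h3 h4 h5
  exact ⟨h2, h3, h4, h5⟩

lemma vanish (hg : Sm g) (ho : Asymptotics.IsLittleO (nhds (0 : ℝ × ℝ)) g
      (fun P : ℝ × ℝ => ‖P‖ ^ 5)) :
    pdx (pdx g) 0 = 0 ∧ pdx (pdy g) 0 = 0 ∧ pdy (pdy g) 0 = 0 ∧
    pdx (pdx (pdy g)) 0 = 0 ∧ pdx (pdy (pdy g)) 0 = 0 ∧ pdy (pdy (pdy g)) 0 = 0 ∧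
    pdx (pdx (pdy (pdy g))) 0 = 0 ∧ pdx (pdy (pdy (pdy g))) 0 = 0 ∧
    pdy (pdy (pdy (pdy g))) 0 = 0 ∧
    pdx (pdx (pdy (pdy (pdy g)))) 0 = 0 ∧ pdx (pdy (pdy (pdy (pdy g)))) 0 = 0 ∧
    pdy (pdy (pdy (pdy (pdy g)))) 0 = 0 := by
  obtain ⟨A2, A3, A4, A5⟩ := diag hg ho 1 0
  obtain ⟨B2, B3, B4, B5⟩ := diag hg ho 0 1
  obtain ⟨C2, C3, C4, C5⟩ := diag hg ho 1 1
  obtain ⟨D2, D3, D4, D5⟩ := diag hg ho 1 (-1)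
  obtain ⟨E2, E3, E4, E5⟩ := diag hg ho 1 2
  obtain ⟨F2, F3, F4, F5⟩ := diag hg ho 1 (-2)
  norm_num at A2 A3 A4 A5 B2 B3 B4 B5 C2 C3 C4 C5 D2 D3 D4 D5 E2 E3 E4 E5 F2 F3 F4 F5
  refine ⟨A2, by linarith, B2, by linarith, by linarith, B3, by linarith, by linarith, B4,
    by linarith, by linarith, B5⟩



noncomputable def poly (c40 c31 c22 c13 c04 c50 c41 c32 c23 c14 c05 : ℝ) : ℝ × ℝ → ℝ :=
  fun P => P.1 * P.2 + P.1 ^ 3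
    + c40 * P.1 ^ 4 + c31 * P.1 ^ 3 * P.2 + c22 * P.1 ^ 2 * P.2 ^ 2
    + c13 * P.1 * P.2 ^ 3 + c04 * P.2 ^ 4
    + c50 * P.1 ^ 5 + c41 * P.1 ^ 4 * P.2 + c32 * P.1 ^ 3 * P.2 ^ 2
    + c23 * P.1 ^ 2 * P.2 ^ 3 + c14 * P.1 * P.2 ^ 4 + c05 * P.2 ^ 5

section Poly
variable (c40 c31 c22 c13 c04 c50 c41 c32 c23 c14 c05 : ℝ)

lemma sm_poly : Sm (poly c40 c31 c22 c13 c04 c50 c41 c32 c23 c14 c05) := by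
  unfold poly
  exact ((((((((((((contDiff_fst.mul contDiff_snd).add (contDiff_fst.pow 3)).add
    (contDiff_const.mul (contDiff_fst.pow 4))).add
    ((contDiff_const.mul (contDiff_fst.pow 3)).mul contDiff_snd)).add
    ((contDiff_const.mul (contDiff_fst.pow 2)).mul (contDiff_snd.pow 2))).add
    ((contDiff_const.mul contDiff_fst).mul (contDiff_snd.pow 3))).add
    (contDiff_const.mul (contDiff_snd.pow 4))).add
    (contDiff_const.mul (contDiff_fst.pow 5))).add
    ((contDiff_const.mul (contDiff_fst.pow 4)).mul contDiff_snd)).add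
    ((contDiff_const.mul (contDiff_fst.pow 3)).mul (contDiff_snd.pow 2))).add
    ((contDiff_const.mul (contDiff_fst.pow 2)).mul (contDiff_snd.pow 3))).add
    ((contDiff_const.mul contDiff_fst).mul (contDiff_snd.pow 4))).add
    (contDiff_const.mul (contDiff_snd.pow 5))

lemma pdy_poly : pdy (poly c40 c31 c22 c13 c04 c50 c41 c32 c23 c14 c05)
    = fun P => P.1 + c31 * P.1 ^ 3 + 2*c22 * P.1 ^ 2 * P.2 + 3*c13 * P.1 * P.2 ^ 2 + 4*c04 * P.2 ^ 3 + c41 * P.1 ^ 4 + 2*c32 * P.1 ^ 3 * P.2 + 3*c23 * P.1 ^ 2 * P.2 ^ 2 + 4*c14 * P.1 * P.2 ^ 3 + 5*c05 * P.2 ^ 4 := by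
  funext P
  show deriv (fun t : ℝ => P.1 * t + P.1 ^ 3 + c40 * P.1 ^ 4 + c31 * P.1 ^ 3 * t + c22 * P.1 ^ 2 * t ^ 2 + c13 * P.1 * t ^ 3 + c04 * t ^ 4 + c50 * P.1 ^ 5 + c41 * P.1 ^ 4 * t + c32 * P.1 ^ 3 * t ^ 2 + c23 * P.1 ^ 2 * t ^ 3 + c14 * P.1 * t ^ 4 + c05 * t ^ 5) P.2 = _
  have H0 := (hasDerivAt_id' P.2).const_mul P.1
  have H1 := H0.add (hasDerivAt_const P.2 (P.1 ^ 3))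
  have H2 := H1.add (hasDerivAt_const P.2 (c40 * P.1 ^ 4))
  have H3 := H2.add ((hasDerivAt_id' P.2).const_mul (c31 * P.1 ^ 3))
  have H4 := H3.add ((hasDerivAt_pow 2 P.2).const_mul (c22 * P.1 ^ 2))
  have H5 := H4.add ((hasDerivAt_pow 3 P.2).const_mul (c13 * P.1))
  have H6 := H5.add ((hasDerivAt_pow 4 P.2).const_mul c04)
  have H7 := H6.add (hasDerivAt_const P.2 (c50 * P.1 ^ 5))
  have H8 := H7.add ((hasDerivAt_id' P.2).const_mul (c41 * P.1 ^ 4))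
  have H9 := H8.add ((hasDerivAt_pow 2 P.2).const_mul (c32 * P.1 ^ 3))
  have H10 := H9.add ((hasDerivAt_pow 3 P.2).const_mul (c23 * P.1 ^ 2))
  have H11 := H10.add ((hasDerivAt_pow 4 P.2).const_mul (c14 * P.1))
  have H12 := H11.add ((hasDerivAt_pow 5 P.2).const_mul c05)
  exact H12.deriv.trans (by push_cast; ring)

lemma pdyy_poly : pdy (pdy (poly c40 c31 c22 c13 c04 c50 c41 c32 c23 c14 c05))
    = fun P => 2*c22 * P.1 ^ 2 + 6*c13 * P.1 * P.2 + 12*c04 * P.2 ^ 2 + 2*c32 * P.1 ^ 3 + 6*c23 * P.1 ^ 2 * P.2 + 12*c14 * P.1 * P.2 ^ 2 + 20*c05 * P.2 ^ 3 := by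
  rw [pdy_poly c40 c31 c22 c13 c04 c50 c41 c32 c23 c14 c05]
  funext P
  show deriv (fun t : ℝ => P.1 + c31 * P.1 ^ 3 + 2*c22 * P.1 ^ 2 * t + 3*c13 * P.1 * t ^ 2 + 4*c04 * t ^ 3 + c41 * P.1 ^ 4 + 2*c32 * P.1 ^ 3 * t + 3*c23 * P.1 ^ 2 * t ^ 2 + 4*c14 * P.1 * t ^ 3 + 5*c05 * t ^ 4) P.2 = _
  have H0 := hasDerivAt_const P.2 P.1
  have H1 := H0.add (hasDerivAt_const P.2 (c31 * P.1 ^ 3))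
  have H2 := H1.add ((hasDerivAt_id' P.2).const_mul (2*c22 * P.1 ^ 2))
  have H3 := H2.add ((hasDerivAt_pow 2 P.2).const_mul (3*c13 * P.1))
  have H4 := H3.add ((hasDerivAt_pow 3 P.2).const_mul (4*c04))
  have H5 := H4.add (hasDerivAt_const P.2 (c41 * P.1 ^ 4))
  have H6 := H5.add ((hasDerivAt_id' P.2).const_mul (2*c32 * P.1 ^ 3))
  have H7 := H6.add ((hasDerivAt_pow 2 P.2).const_mul (3*c23 * P.1 ^ 2))
  have H8 := H7.add ((hasDerivAt_pow 3 P.2).const_mul (4*c14 * P.1))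
  have H9 := H8.add ((hasDerivAt_pow 4 P.2).const_mul (5*c05))
  exact H9.deriv.trans (by push_cast; ring)

lemma pdyyy_poly : pdy (pdy (pdy (poly c40 c31 c22 c13 c04 c50 c41 c32 c23 c14 c05)))
    = fun P => 6*c13 * P.1 + 24*c04 * P.2 + 6*c23 * P.1 ^ 2 + 24*c14 * P.1 * P.2 + 60*c05 * P.2 ^ 2 := by
  rw [pdyy_poly c40 c31 c22 c13 c04 c50 c41 c32 c23 c14 c05]
  funext P
  show deriv (fun t : ℝ => 2*c22 * P.1 ^ 2 + 6*c13 * P.1 * t + 12*c04 * t ^ 2 + 2*c32 * P.1 ^ 3 + 6*c23 * P.1 ^ 2 * t + 12*c14 * P.1 * t ^ 2 + 20*c05 * t ^ 3) P.2 = _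
  have H0 := hasDerivAt_const P.2 (2*c22 * P.1 ^ 2)
  have H1 := H0.add ((hasDerivAt_id' P.2).const_mul (6*c13 * P.1))
  have H2 := H1.add ((hasDerivAt_pow 2 P.2).const_mul (12*c04))
  have H3 := H2.add (hasDerivAt_const P.2 (2*c32 * P.1 ^ 3))
  have H4 := H3.add ((hasDerivAt_id' P.2).const_mul (6*c23 * P.1 ^ 2))
  have H5 := H4.add ((hasDerivAt_pow 2 P.2).const_mul (12*c14 * P.1))
  have H6 := H5.add ((hasDerivAt_pow 3 P.2).const_mul (20*c05))
  exact H6.deriv.trans (by push_cast; ring)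

lemma pdx_poly : pdx (poly c40 c31 c22 c13 c04 c50 c41 c32 c23 c14 c05)
    = fun P => P.2 + 3 * P.1 ^ 2 + 4*c40 * P.1 ^ 3 + 3*c31 * P.1 ^ 2 * P.2 + 2*c22 * P.1 * P.2 ^ 2 + c13 * P.2 ^ 3 + 5*c50 * P.1 ^ 4 + 4*c41 * P.1 ^ 3 * P.2 + 3*c32 * P.1 ^ 2 * P.2 ^ 2 + 2*c23 * P.1 * P.2 ^ 3 + c14 * P.2 ^ 4 := by
  funext P
  show deriv (fun s : ℝ => s * P.2 + s ^ 3 + c40 * s ^ 4 + c31 * s ^ 3 * P.2 + c22 * s ^ 2 * P.2 ^ 2 + c13 * s * P.2 ^ 3 + c04 * P.2 ^ 4 + c50 * s ^ 5 + c41 * s ^ 4 * P.2 + c32 * s ^ 3 * P.2 ^ 2 + c23 * s ^ 2 * P.2 ^ 3 + c14 * s * P.2 ^ 4 + c05 * P.2 ^ 5) P.1 = _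
  have H0 := (hasDerivAt_id' P.1).mul_const P.2
  have H1 := H0.add (hasDerivAt_pow 3 P.1)
  have H2 := H1.add ((hasDerivAt_pow 4 P.1).const_mul c40)
  have H3 := H2.add (((hasDerivAt_pow 3 P.1).const_mul c31).mul_const P.2)
  have H4 := H3.add (((hasDerivAt_pow 2 P.1).const_mul c22).mul_const (P.2 ^ 2))
  have H5 := H4.add (((hasDerivAt_id' P.1).const_mul c13).mul_const (P.2 ^ 3))
  have H6 := H5.add (hasDerivAt_const P.1 (c04 * P.2 ^ 4))
  have H7 := H6.add ((hasDerivAt_pow 5 P.1).const_mul c50)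
  have H8 := H7.add (((hasDerivAt_pow 4 P.1).const_mul c41).mul_const P.2)
  have H9 := H8.add (((hasDerivAt_pow 3 P.1).const_mul c32).mul_const (P.2 ^ 2))
  have H10 := H9.add (((hasDerivAt_pow 2 P.1).const_mul c23).mul_const (P.2 ^ 3))
  have H11 := H10.add (((hasDerivAt_id' P.1).const_mul c14).mul_const (P.2 ^ 4))
  have H12 := H11.add (hasDerivAt_const P.1 (c05 * P.2 ^ 5))
  exact H12.deriv.trans (by push_cast; ring)

lemma pdxy_poly : pdy (pdx (poly c40 c31 c22 c13 c04 c50 c41 c32 c23 c14 c05))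
    = fun P => 1 + 3*c31 * P.1 ^ 2 + 4*c22 * P.1 * P.2 + 3*c13 * P.2 ^ 2 + 4*c41 * P.1 ^ 3 + 6*c32 * P.1 ^ 2 * P.2 + 6*c23 * P.1 * P.2 ^ 2 + 4*c14 * P.2 ^ 3 := by
  rw [pdx_poly c40 c31 c22 c13 c04 c50 c41 c32 c23 c14 c05]
  funext P
  show deriv (fun t : ℝ => t + 3 * P.1 ^ 2 + 4*c40 * P.1 ^ 3 + 3*c31 * P.1 ^ 2 * t + 2*c22 * P.1 * t ^ 2 + c13 * t ^ 3 + 5*c50 * P.1 ^ 4 + 4*c41 * P.1 ^ 3 * t + 3*c32 * P.1 ^ 2 * t ^ 2 + 2*c23 * P.1 * t ^ 3 + c14 * t ^ 4) P.2 = _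
  have H0 := hasDerivAt_id' P.2
  have H1 := H0.add (hasDerivAt_const P.2 (3 * P.1 ^ 2))
  have H2 := H1.add (hasDerivAt_const P.2 (4*c40 * P.1 ^ 3))
  have H3 := H2.add ((hasDerivAt_id' P.2).const_mul (3*c31 * P.1 ^ 2))
  have H4 := H3.add ((hasDerivAt_pow 2 P.2).const_mul (2*c22 * P.1))
  have H5 := H4.add ((hasDerivAt_pow 3 P.2).const_mul c13)
  have H6 := H5.add (hasDerivAt_const P.2 (5*c50 * P.1 ^ 4))
  have H7 := H6.add ((hasDerivAt_id' P.2).const_mul (4*c41 * P.1 ^ 3))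
  have H8 := H7.add ((hasDerivAt_pow 2 P.2).const_mul (3*c32 * P.1 ^ 2))
  have H9 := H8.add ((hasDerivAt_pow 3 P.2).const_mul (2*c23 * P.1))
  have H10 := H9.add ((hasDerivAt_pow 4 P.2).const_mul c14)
  exact H10.deriv.trans (by push_cast; ring)

lemma pdxyy_poly : pdy (pdy (pdx (poly c40 c31 c22 c13 c04 c50 c41 c32 c23 c14 c05)))
    = fun P => 4*c22 * P.1 + 6*c13 * P.2 + 6*c32 * P.1 ^ 2 + 12*c23 * P.1 * P.2 + 12*c14 * P.2 ^ 2 := by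
  rw [pdxy_poly c40 c31 c22 c13 c04 c50 c41 c32 c23 c14 c05]
  funext P
  show deriv (fun t : ℝ => 1 + 3*c31 * P.1 ^ 2 + 4*c22 * P.1 * t + 3*c13 * t ^ 2 + 4*c41 * P.1 ^ 3 + 6*c32 * P.1 ^ 2 * t + 6*c23 * P.1 * t ^ 2 + 4*c14 * t ^ 3) P.2 = _
  have H0 := hasDerivAt_const P.2 (1:ℝ)
  have H1 := H0.add (hasDerivAt_const P.2 (3*c31 * P.1 ^ 2))
  have H2 := H1.add ((hasDerivAt_id' P.2).const_mul (4*c22 * P.1))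
  have H3 := H2.add ((hasDerivAt_pow 2 P.2).const_mul (3*c13))
  have H4 := H3.add (hasDerivAt_const P.2 (4*c41 * P.1 ^ 3))
  have H5 := H4.add ((hasDerivAt_id' P.2).const_mul (6*c32 * P.1 ^ 2))
  have H6 := H5.add ((hasDerivAt_pow 2 P.2).const_mul (6*c23 * P.1))
  have H7 := H6.add ((hasDerivAt_pow 3 P.2).const_mul (4*c14))
  exact H7.deriv.trans (by push_cast; ring)

lemma pdxx_poly : pdx (pdx (poly c40 c31 c22 c13 c04 c50 c41 c32 c23 c14 c05))
    = fun P => 6 * P.1 + 12*c40 * P.1 ^ 2 + 6*c31 * P.1 * P.2 + 2*c22 * P.2 ^ 2 + 20*c50 * P.1 ^ 3 + 12*c41 * P.1 ^ 2 * P.2 + 6*c32 * P.1 * P.2 ^ 2 + 2*c23 * P.2 ^ 3 := by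
  rw [pdx_poly c40 c31 c22 c13 c04 c50 c41 c32 c23 c14 c05]
  funext P
  show deriv (fun s : ℝ => P.2 + 3 * s ^ 2 + 4*c40 * s ^ 3 + 3*c31 * s ^ 2 * P.2 + 2*c22 * s * P.2 ^ 2 + c13 * P.2 ^ 3 + 5*c50 * s ^ 4 + 4*c41 * s ^ 3 * P.2 + 3*c32 * s ^ 2 * P.2 ^ 2 + 2*c23 * s * P.2 ^ 3 + c14 * P.2 ^ 4) P.1 = _
  have H0 := hasDerivAt_const P.1 P.2
  have H1 := H0.add ((hasDerivAt_pow 2 P.1).const_mul 3)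
  have H2 := H1.add ((hasDerivAt_pow 3 P.1).const_mul (4*c40))
  have H3 := H2.add (((hasDerivAt_pow 2 P.1).const_mul (3*c31)).mul_const P.2)
  have H4 := H3.add (((hasDerivAt_id' P.1).const_mul (2*c22)).mul_const (P.2 ^ 2))
  have H5 := H4.add (hasDerivAt_const P.1 (c13 * P.2 ^ 3))
  have H6 := H5.add ((hasDerivAt_pow 4 P.1).const_mul (5*c50))
  have H7 := H6.add (((hasDerivAt_pow 3 P.1).const_mul (4*c41)).mul_const P.2)
  have H8 := H7.add (((hasDerivAt_pow 2 P.1).const_mul (3*c32)).mul_const (P.2 ^ 2))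
  have H9 := H8.add (((hasDerivAt_id' P.1).const_mul (2*c23)).mul_const (P.2 ^ 3))
  have H10 := H9.add (hasDerivAt_const P.1 (c14 * P.2 ^ 4))
  exact H10.deriv.trans (by push_cast; ring)


end Poly

open Filter

lemma normpow_o {k m : ℕ} (h : k < m) :
    (fun P : ℝ × ℝ => ‖P‖ ^ m) =o[nhds (0 : ℝ × ℝ)] fun P : ℝ × ℝ => ‖P‖ ^ k := by
  rw [isLittleO_iff]
  intro c hc
  rw [Metric.eventually_nhds_iff]
  refine ⟨min 1 c, by positivity, fun P hP => ?_⟩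
  have hPn : ‖P‖ < min 1 c := by rwa [dist_zero_right] at hP
  have h1 : ‖P‖ ≤ 1 := le_of_lt (lt_of_lt_of_le hPn (min_le_left _ _))
  have h2 : ‖P‖ ≤ c := le_of_lt (lt_of_lt_of_le hPn (min_le_right _ _))
  have hsplit : ‖P‖ ^ m = ‖P‖ ^ (m - k) * ‖P‖ ^ k := by
    rw [← pow_add]; congr 1; omega
  have hsm : ‖P‖ ^ (m - k) ≤ c := by
    calc ‖P‖ ^ (m - k) ≤ ‖P‖ ^ 1 := pow_le_pow_of_le_one (norm_nonneg _) h1 (by omega)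
      _ = ‖P‖ := pow_one _
      _ ≤ c := h2
  rw [Real.norm_eq_abs, abs_of_nonneg (pow_nonneg (norm_nonneg _) _),
    Real.norm_eq_abs, abs_of_nonneg (pow_nonneg (norm_nonneg _) _), hsplit]
  exact mul_le_mul_of_nonneg_right hsm (pow_nonneg (norm_nonneg _) _)

lemma fst_abs_le (P : ℝ × ℝ) : |P.1| ≤ ‖P‖ := by
  rw [← Real.norm_eq_abs]; exact norm_fst_le P

lemma snd_abs_le (P : ℝ × ℝ) : |P.2| ≤ ‖P‖ := by
  rw [← Real.norm_eq_abs]; exact norm_snd_le P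

lemma quad_O (k1 k2 k3 : ℝ) :
    (fun P : ℝ × ℝ => k1 * P.1 ^ 2 + k2 * P.1 * P.2 + k3 * P.2 ^ 2)
      =O[nhds (0 : ℝ × ℝ)] fun P : ℝ × ℝ => ‖P‖ ^ 2 := by
  rw [isBigO_iff]
  refine ⟨|k1| + |k2| + |k3|, Filter.Eventually.of_forall fun P => ?_⟩
  have h1 := fst_abs_le P
  have h2 := snd_abs_le P
  have e1 : |k1 * P.1 ^ 2| ≤ |k1| * ‖P‖ ^ 2 := by
    rw [abs_mul, abs_pow]
    exact mul_le_mul_of_nonneg_left (pow_le_pow_left₀ (abs_nonneg _) h1 2) (abs_nonneg k1)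
  have e2 : |k2 * P.1 * P.2| ≤ |k2| * ‖P‖ ^ 2 := by
    rw [abs_mul, abs_mul]
    calc |k2| * |P.1| * |P.2| ≤ |k2| * ‖P‖ * ‖P‖ :=
          mul_le_mul (mul_le_mul_of_nonneg_left h1 (abs_nonneg k2)) h2 (abs_nonneg _)
            (by positivity)
      _ = |k2| * ‖P‖ ^ 2 := by ring
  have e3 : |k3 * P.2 ^ 2| ≤ |k3| * ‖P‖ ^ 2 := by
    rw [abs_mul, abs_pow]
    exact mul_le_mul_of_nonneg_left (pow_le_pow_left₀ (abs_nonneg _) h2 2) (abs_nonneg k3)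
  have habs : |k1 * P.1 ^ 2 + k2 * P.1 * P.2 + k3 * P.2 ^ 2|
      ≤ |k1 * P.1 ^ 2| + |k2 * P.1 * P.2| + |k3 * P.2 ^ 2| := by
    calc |k1 * P.1 ^ 2 + k2 * P.1 * P.2 + k3 * P.2 ^ 2|
        ≤ |k1 * P.1 ^ 2 + k2 * P.1 * P.2| + |k3 * P.2 ^ 2| := abs_add_le _ _
      _ ≤ |k1 * P.1 ^ 2| + |k2 * P.1 * P.2| + |k3 * P.2 ^ 2| := by
          have := abs_add_le (k1 * P.1 ^ 2) (k2 * P.1 * P.2); linarith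
  rw [Real.norm_eq_abs, Real.norm_eq_abs, abs_of_nonneg (pow_nonneg (norm_nonneg _) _)]
  nlinarith [e1, e2, e3, habs]

lemma cubic_o (k1 k2 k3 k4 : ℝ) :
    (fun P : ℝ × ℝ => k1 * P.1 ^ 3 + k2 * P.1 ^ 2 * P.2 + k3 * P.1 * P.2 ^ 2 + k4 * P.2 ^ 3)
      =o[nhds (0 : ℝ × ℝ)] fun P : ℝ × ℝ => ‖P‖ ^ 2 := by
  have hO : (fun P : ℝ × ℝ => k1 * P.1 ^ 3 + k2 * P.1 ^ 2 * P.2 + k3 * P.1 * P.2 ^ 2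
      + k4 * P.2 ^ 3) =O[nhds (0 : ℝ × ℝ)] fun P : ℝ × ℝ => ‖P‖ ^ 3 := by
    rw [isBigO_iff]
    refine ⟨|k1| + |k2| + |k3| + |k4|, Filter.Eventually.of_forall fun P => ?_⟩
    have h1 := fst_abs_le P
    have h2 := snd_abs_le P
    have hn : (0:ℝ) ≤ ‖P‖ := norm_nonneg _
    have p1 : |P.1| ^ 3 ≤ ‖P‖ ^ 3 := pow_le_pow_left₀ (abs_nonneg _) h1 3
    have p2 : |P.1| ^ 2 * |P.2| ≤ ‖P‖ ^ 3 := by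
      calc |P.1| ^ 2 * |P.2| ≤ ‖P‖ ^ 2 * ‖P‖ :=
            mul_le_mul (pow_le_pow_left₀ (abs_nonneg _) h1 2) h2 (abs_nonneg _) (by positivity)
        _ = ‖P‖ ^ 3 := by ring
    have p3 : |P.1| * |P.2| ^ 2 ≤ ‖P‖ ^ 3 := by
      calc |P.1| * |P.2| ^ 2 ≤ ‖P‖ * ‖P‖ ^ 2 :=
            mul_le_mul h1 (pow_le_pow_left₀ (abs_nonneg _) h2 2) (by positivity) hn
        _ = ‖P‖ ^ 3 := by ring
    have p4 : |P.2| ^ 3 ≤ ‖P‖ ^ 3 := pow_le_pow_left₀ (abs_nonneg _) h2 3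
    have e1 : |k1 * P.1 ^ 3| ≤ |k1| * ‖P‖ ^ 3 := by
      rw [abs_mul, abs_pow]; exact mul_le_mul_of_nonneg_left p1 (abs_nonneg _)
    have e2 : |k2 * P.1 ^ 2 * P.2| ≤ |k2| * ‖P‖ ^ 3 := by
      rw [abs_mul, abs_mul, abs_pow, mul_assoc]
      exact mul_le_mul_of_nonneg_left p2 (abs_nonneg _)
    have e3 : |k3 * P.1 * P.2 ^ 2| ≤ |k3| * ‖P‖ ^ 3 := by
      rw [abs_mul, abs_mul, abs_pow, mul_assoc]
      exact mul_le_mul_of_nonneg_left p3 (abs_nonneg _)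
    have e4 : |k4 * P.2 ^ 3| ≤ |k4| * ‖P‖ ^ 3 := by
      rw [abs_mul, abs_pow]; exact mul_le_mul_of_nonneg_left p4 (abs_nonneg _)
    have habs : |k1 * P.1 ^ 3 + k2 * P.1 ^ 2 * P.2 + k3 * P.1 * P.2 ^ 2 + k4 * P.2 ^ 3|
        ≤ |k1 * P.1 ^ 3| + |k2 * P.1 ^ 2 * P.2| + |k3 * P.1 * P.2 ^ 2| + |k4 * P.2 ^ 3| := by
      have a1 := abs_add_le (k1 * P.1 ^ 3 + k2 * P.1 ^ 2 * P.2 + k3 * P.1 * P.2 ^ 2) (k4 * P.2 ^ 3)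
      have a2 := abs_add_le (k1 * P.1 ^ 3 + k2 * P.1 ^ 2 * P.2) (k3 * P.1 * P.2 ^ 2)
      have a3 := abs_add_le (k1 * P.1 ^ 3) (k2 * P.1 ^ 2 * P.2)
      linarith
    rw [Real.norm_eq_abs, Real.norm_eq_abs, abs_of_nonneg (pow_nonneg (norm_nonneg _) _)]
    nlinarith [e1, e2, e3, e4, habs]
  exact hO.trans_isLittleO (normpow_o (by norm_num))


end S16


open S16

/-- for a surface `z = f(x,y)` with 5-jet
`xy + x³ + Σ_{4≤i+j≤5} c_{ij}x^iy^j`: (1) there is a smooth solution `u` near the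
origin of `f_xx u² + 2f_xy u + f_yy = 0` with `u(0) = 0`; (2) any such `u` satisfies
`u = −(c₂₂x² + 3c₁₃xy + 6c₀₄y²) + o(‖(x,y)‖²)`; and (3) the function
`W = f_xxx u³ + 3f_xxy u² + 3f_xyy u + f_yyy` (whose zero set is the flecnodal curve)
satisfies `W = 6(c₁₃x + 4c₀₄y + c₂₃x² + 4c₁₄xy + 10c₀₅y²) + o(‖(x,y)‖²)`. -/
theorem stmt16 (c40 c31 c22 c13 c04 c50 c41 c32 c23 c14 c05 : ℝ)
    (f : ℝ × ℝ → ℝ) (hf : ContDiff ℝ (⊤ : ℕ∞) f)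
    (hT : (fun P : ℝ × ℝ =>
        f P - (P.1 * P.2 + P.1 ^ 3
          + c40 * P.1 ^ 4 + c31 * P.1 ^ 3 * P.2 + c22 * P.1 ^ 2 * P.2 ^ 2
          + c13 * P.1 * P.2 ^ 3 + c04 * P.2 ^ 4
          + c50 * P.1 ^ 5 + c41 * P.1 ^ 4 * P.2 + c32 * P.1 ^ 3 * P.2 ^ 2
          + c23 * P.1 ^ 2 * P.2 ^ 3 + c14 * P.1 * P.2 ^ 4 + c05 * P.2 ^ 5))
      =o[nhds (0 : ℝ × ℝ)] (fun P : ℝ × ℝ => ‖P‖ ^ 5)) :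
    let fxx := pdx (pdx f)
    let fxy := pdy (pdx f)
    let fyy := pdy (pdy f)
    let fxxx := pdx (pdx (pdx f))
    let fxxy := pdy (pdx (pdx f))
    let fxyy := pdy (pdy (pdx f))
    let fyyy := pdy (pdy (pdy f))
    (∃ U ∈ nhds (0 : ℝ × ℝ), ∃ u : ℝ × ℝ → ℝ, ContDiffOn ℝ (⊤ : ℕ∞) u U ∧ u 0 = 0 ∧
        ∀ P ∈ U, fxx P * u P ^ 2 + 2 * fxy P * u P + fyy P = 0) ∧
    (∀ U ∈ nhds (0 : ℝ × ℝ), ∀ u : ℝ × ℝ → ℝ, ContDiffOn ℝ (⊤ : ℕ∞) u U → u 0 = 0 →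
      (∀ P ∈ U, fxx P * u P ^ 2 + 2 * fxy P * u P + fyy P = 0) →
      ((fun P : ℝ × ℝ =>
          u P + (c22 * P.1 ^ 2 + 3 * c13 * P.1 * P.2 + 6 * c04 * P.2 ^ 2))
        =o[nhds (0 : ℝ × ℝ)] (fun P : ℝ × ℝ => ‖P‖ ^ 2)) ∧
      ((fun P : ℝ × ℝ =>
          (fxxx P * u P ^ 3 + 3 * fxxy P * u P ^ 2 + 3 * fxyy P * u P + fyyy P)
            - 6 * (c13 * P.1 + 4 * c04 * P.2 + c23 * P.1 ^ 2 + 4 * c14 * P.1 * P.2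
              + 10 * c05 * P.2 ^ 2))
        =o[nhds (0 : ℝ × ℝ)] (fun P : ℝ × ℝ => ‖P‖ ^ 2))) := by
  intro fxx fxy fyy fxxx fxxy fxyy fyyy
  simp only [show fxx = pdx (pdx f) from rfl, show fxy = pdy (pdx f) from rfl,
    show fyy = pdy (pdy f) from rfl, show fxxx = pdx (pdx (pdx f)) from rfl,
    show fxxy = pdy (pdx (pdx f)) from rfl, show fxyy = pdy (pdy (pdx f)) from rfl,
    show fyyy = pdy (pdy (pdy f)) from rfl]
  -- setup
  set Q : ℝ × ℝ → ℝ := S16.poly c40 c31 c22 c13 c04 c50 c41 c32 c23 c14 c05 with hQdef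
  set g : ℝ × ℝ → ℝ := fun P => f P - Q P with hgdef
  have hQsm : Sm Q := S16.sm_poly c40 c31 c22 c13 c04 c50 c41 c32 c23 c14 c05
  have hgsm : Sm g := hf.sub hQsm
  have ho : g =o[nhds (0 : ℝ × ℝ)] fun P : ℝ × ℝ => ‖P‖ ^ 5 := hT
  obtain ⟨vxx, vxy, vyy, vxxy, vxyy, vyyy, vxxyy, vxyyy, vyyyy, vxxyyy, vxyyyy, vyyyyy⟩ :=
    S16.vanish hgsm ho
  have hfeq : f = fun P => g P + Q P := by
    funext P
    show f P = f P - Q P + Q P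
    ring
  -- splits
  have ex : pdx f = fun P => pdx g P + pdx Q P := by
    rw [hfeq]; exact pdx_add hgsm hQsm
  have ey : pdy f = fun P => pdy g P + pdy Q P := by
    rw [hfeq]; exact pdy_add hgsm hQsm
  have exx : pdx (pdx f) = fun P => pdx (pdx g) P + pdx (pdx Q) P := by
    rw [ex]; exact pdx_add (sm_pdx hgsm) (sm_pdx hQsm)
  have exy : pdy (pdx f) = fun P => pdy (pdx g) P + pdy (pdx Q) P := by
    rw [ex]; exact pdy_add (sm_pdx hgsm) (sm_pdx hQsm)
  have eyy : pdy (pdy f) = fun P => pdy (pdy g) P + pdy (pdy Q) P := by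
    rw [ey]; exact pdy_add (sm_pdy hgsm) (sm_pdy hQsm)
  have eyyy : pdy (pdy (pdy f)) = fun P => pdy (pdy (pdy g)) P + pdy (pdy (pdy Q)) P := by
    rw [eyy]; exact pdy_add (sm_pdy (sm_pdy hgsm)) (sm_pdy (sm_pdy hQsm))
  have exyy : pdy (pdy (pdx f)) = fun P => pdy (pdy (pdx g)) P + pdy (pdy (pdx Q)) P := by
    rw [exy]; exact pdy_add (sm_pdy (sm_pdx hgsm)) (sm_pdy (sm_pdx hQsm))
  -- poly partial functions
  have eQyy : pdy (pdy Q) = fun P : ℝ × ℝ => 2*c22 * P.1 ^ 2 + 6*c13 * P.1 * P.2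
      + 12*c04 * P.2 ^ 2 + 2*c32 * P.1 ^ 3 + 6*c23 * P.1 ^ 2 * P.2 + 12*c14 * P.1 * P.2 ^ 2
      + 20*c05 * P.2 ^ 3 := by
    rw [hQdef]; exact S16.pdyy_poly _ _ _ _ _ _ _ _ _ _ _
  have eQyyy : pdy (pdy (pdy Q)) = fun P : ℝ × ℝ => 6*c13 * P.1 + 24*c04 * P.2
      + 6*c23 * P.1 ^ 2 + 24*c14 * P.1 * P.2 + 60*c05 * P.2 ^ 2 := by
    rw [hQdef]; exact S16.pdyyy_poly _ _ _ _ _ _ _ _ _ _ _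
  have eQxy : pdy (pdx Q) = fun P : ℝ × ℝ => 1 + 3*c31 * P.1 ^ 2 + 4*c22 * P.1 * P.2
      + 3*c13 * P.2 ^ 2 + 4*c41 * P.1 ^ 3 + 6*c32 * P.1 ^ 2 * P.2 + 6*c23 * P.1 * P.2 ^ 2
      + 4*c14 * P.2 ^ 3 := by
    rw [hQdef]; exact S16.pdxy_poly _ _ _ _ _ _ _ _ _ _ _
  have eQxyy : pdy (pdy (pdx Q)) = fun P : ℝ × ℝ => 4*c22 * P.1 + 6*c13 * P.2
      + 6*c32 * P.1 ^ 2 + 12*c23 * P.1 * P.2 + 12*c14 * P.2 ^ 2 := by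
    rw [hQdef]; exact S16.pdxyy_poly _ _ _ _ _ _ _ _ _ _ _
  have eQxx : pdx (pdx Q) = fun P : ℝ × ℝ => 6 * P.1 + 12*c40 * P.1 ^ 2 + 6*c31 * P.1 * P.2
      + 2*c22 * P.2 ^ 2 + 20*c50 * P.1 ^ 3 + 12*c41 * P.1 ^ 2 * P.2 + 6*c32 * P.1 * P.2 ^ 2
      + 2*c23 * P.2 ^ 3 := by
    rw [hQdef]; exact S16.pdxx_poly _ _ _ _ _ _ _ _ _ _ _
  -- values of f-partials at 0
  have hfxx0 : pdx (pdx f) 0 = 0 := by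
    rw [exx]
    show pdx (pdx g) 0 + pdx (pdx Q) 0 = 0
    rw [vxx, eQxx]; norm_num
  have hfxy0 : pdy (pdx f) 0 = 1 := by
    rw [exy]
    show pdy (pdx g) 0 + pdy (pdx Q) 0 = 1
    rw [y10 hgsm, vxy, eQxy]; norm_num
  have hfyy0 : pdy (pdy f) 0 = 0 := by
    rw [eyy]
    show pdy (pdy g) 0 + pdy (pdy Q) 0 = 0
    rw [vyy, eQyy]; norm_num
  have hfxyy0 : pdy (pdy (pdx f)) 0 = 0 := by
    rw [exyy]
    show pdy (pdy (pdx g)) 0 + pdy (pdy (pdx Q)) 0 = 0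
    rw [y10 hgsm, y11 hgsm, vxyy, eQxyy]; norm_num
  -- smoothness of f-partials
  have sfxx : Sm (pdx (pdx f)) := sm_pdx (sm_pdx hf)
  have sfxy : Sm (pdy (pdx f)) := sm_pdy (sm_pdx hf)
  have sfyy : Sm (pdy (pdy f)) := sm_pdy (sm_pdy hf)
  have sfxxx : Sm (pdx (pdx (pdx f))) := sm_pdx sfxx
  have sfxxy : Sm (pdy (pdx (pdx f))) := sm_pdy sfxx
  have sfxyy : Sm (pdy (pdy (pdx f))) := sm_pdy sfxy
  have sfyyy : Sm (pdy (pdy (pdy f))) := sm_pdy sfyy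
  -- little-o expansions
  have hgyyo : pdy (pdy g) =o[nhds (0 : ℝ × ℝ)] fun P : ℝ × ℝ => ‖P‖ ^ 2 :=
    forward2 (sm_pdy (sm_pdy hgsm)) vyy vxyy vyyy vxxyy
      (by rw [y12 hgsm]; exact vxyyy) vxyyy vyyyy
  have hgyyyo : pdy (pdy (pdy g)) =o[nhds (0 : ℝ × ℝ)] fun P : ℝ × ℝ => ‖P‖ ^ 2 :=
    forward2 (sm_pdy (sm_pdy (sm_pdy hgsm))) vyyy vxyyy vyyyy vxxyyy
      (by rw [y13 hgsm]; exact vxyyyy) vxyyyy vyyyyy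
  have Eyy : (fun P : ℝ × ℝ => pdy (pdy f) P
      - (2*c22 * P.1 ^ 2 + 6*c13 * P.1 * P.2 + 12*c04 * P.2 ^ 2))
      =o[nhds (0 : ℝ × ℝ)] fun P : ℝ × ℝ => ‖P‖ ^ 2 := by
    have h1 := hgyyo.add (cubic_o (2*c32) (6*c23) (12*c14) (20*c05))
    refine h1.congr_left fun P => ?_
    simp only [eyy, eQyy]
    ring
  have Eyyy : (fun P : ℝ × ℝ => pdy (pdy (pdy f)) P
      - 6 * (c13 * P.1 + 4 * c04 * P.2 + c23 * P.1 ^ 2 + 4 * c14 * P.1 * P.2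
        + 10 * c05 * P.2 ^ 2))
      =o[nhds (0 : ℝ × ℝ)] fun P : ℝ × ℝ => ‖P‖ ^ 2 := by
    refine hgyyyo.congr_left fun P => ?_
    simp only [eyyy, eQyyy]
    ring
  constructor
  · -- PART 1 : existence of u
    set D : ℝ × ℝ → ℝ := fun P => pdy (pdx f) P ^ 2 - pdx (pdx f) P * pdy (pdy f) P
      with hDdef
    have hDsm : Sm D := (sfxy.pow 2).sub (sfxx.mul sfyy)
    have hD0 : D 0 = 1 := by
      rw [hDdef]
      show pdy (pdx f) 0 ^ 2 - pdx (pdx f) 0 * pdy (pdy f) 0 = 1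
      rw [hfxy0, hfxx0, hfyy0]; norm_num
    have hUopen : IsOpen {P : ℝ × ℝ | 0 < D P ∧ 0 < pdy (pdx f) P + Real.sqrt (D P)} := by
      have h1 : IsOpen {P : ℝ × ℝ | 0 < D P} := isOpen_lt continuous_const hDsm.continuous
      have h2 : IsOpen {P : ℝ × ℝ | 0 < pdy (pdx f) P + Real.sqrt (D P)} :=
        isOpen_lt continuous_const
          (sfxy.continuous.add (Real.continuous_sqrt.comp hDsm.continuous))
      exact h1.inter h2
    have hU0 : (0 : ℝ × ℝ) ∈ {P : ℝ × ℝ | 0 < D P ∧ 0 < pdy (pdx f) P + Real.sqrt (D P)} := by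
      refine ⟨by rw [hD0]; norm_num, ?_⟩
      rw [hfxy0, hD0, Real.sqrt_one]; norm_num
    refine ⟨{P : ℝ × ℝ | 0 < D P ∧ 0 < pdy (pdx f) P + Real.sqrt (D P)},
      hUopen.mem_nhds hU0,
      fun P => -(pdy (pdy f) P) / (pdy (pdx f) P + Real.sqrt (D P)), ?_, ?_, ?_⟩
    · intro P hP
      have h1 : ContDiffAt ℝ (⊤ : ℕ∞) (fun P : ℝ × ℝ => Real.sqrt (D P)) P :=
        hDsm.contDiffAt.sqrt (ne_of_gt hP.1)
      exact ((sfyy.contDiffAt.neg.div (sfxy.contDiffAt.add h1)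
        (ne_of_gt hP.2))).contDiffWithinAt
    · show -(pdy (pdy f) 0) / (pdy (pdx f) 0 + Real.sqrt (D 0)) = 0
      rw [hfyy0]; norm_num
    · intro P hP
      obtain ⟨hP1, hP2⟩ := hP
      have hs2 : Real.sqrt (D P) ^ 2 = pdy (pdx f) P ^ 2 - pdx (pdx f) P * pdy (pdy f) P := by
        rw [Real.sq_sqrt hP1.le, hDdef]
      have hne : pdy (pdx f) P + Real.sqrt (D P) ≠ 0 := ne_of_gt hP2
      field_simp
      linear_combination (pdy (pdy f) P) * hs2
  · -- PART 2
    intro U hU u hu hu0 hequ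
    have hucont : ContinuousAt u 0 := hu.continuousOn.continuousAt hU
    have hUev : ∀ᶠ P in nhds (0 : ℝ × ℝ), P ∈ U := by
      filter_upwards [hU] with P hP using hP
    have hd : Filter.Tendsto (fun P : ℝ × ℝ => pdx (pdx f) P * u P + 2 * pdy (pdx f) P)
        (nhds 0) (nhds 2) := by
      have h1 := ((sfxx.continuous.tendsto 0).mul hucont).add
        ((sfxy.continuous.tendsto 0).const_mul 2)
      rw [hfxx0, hfxy0, hu0] at h1
      simpa using h1
    have hdev : ∀ᶠ P in nhds (0 : ℝ × ℝ),
        1 ≤ pdx (pdx f) P * u P + 2 * pdy (pdx f) P :=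
      hd.eventually (eventually_ge_nhds one_lt_two)
    have hfyyO : (fun P : ℝ × ℝ => pdy (pdy f) P) =O[nhds (0 : ℝ × ℝ)]
        fun P : ℝ × ℝ => ‖P‖ ^ 2 := by
      have h1 := Eyy.isBigO.add (quad_O (2*c22) (6*c13) (12*c04))
      exact h1.congr_left fun P => by ring
    have huO : u =O[nhds (0 : ℝ × ℝ)] fun P : ℝ × ℝ => ‖P‖ ^ 2 := by
      refine IsBigO.trans ?_ hfyyO
      rw [isBigO_iff]
      refine ⟨1, ?_⟩
      filter_upwards [hdev, hUev] with P h1 h2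
      have heq := hequ P h2
      have h3 : u P * (pdx (pdx f) P * u P + 2 * pdy (pdx f) P) = -(pdy (pdy f) P) := by
        linear_combination heq
      have h4 : |u P| * |pdx (pdx f) P * u P + 2 * pdy (pdx f) P| = |pdy (pdy f) P| := by
        rw [← abs_mul, h3, abs_neg]
      have h5 : |pdx (pdx f) P * u P + 2 * pdy (pdx f) P|
          = pdx (pdx f) P * u P + 2 * pdy (pdx f) P := abs_of_nonneg (by linarith)
      rw [Real.norm_eq_abs, Real.norm_eq_abs, one_mul]
      nlinarith [abs_nonneg (u P)]
    have hd2o : (fun P : ℝ × ℝ => (pdx (pdx f) P * u P + 2 * pdy (pdx f) P) - 2)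
        =o[nhds (0 : ℝ × ℝ)] fun _ : ℝ × ℝ => (1 : ℝ) := by
      rw [isLittleO_one_iff]
      simpa using hd.sub_const 2
    have T1 : (fun P : ℝ × ℝ => pdy (pdy f) P
        * ((pdx (pdx f) P * u P + 2 * pdy (pdx f) P) - 2))
        =o[nhds (0 : ℝ × ℝ)] fun P : ℝ × ℝ => ‖P‖ ^ 2 := by
      have := hfyyO.mul_isLittleO hd2o
      simpa using this
    have T2 : (fun P : ℝ × ℝ => u P + pdy (pdy f) P / 2)
        =o[nhds (0 : ℝ × ℝ)] fun P : ℝ × ℝ => ‖P‖ ^ 2 := by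
      refine IsBigO.trans_isLittleO ?_ T1
      rw [isBigO_iff]
      refine ⟨1, ?_⟩
      filter_upwards [hdev, hUev] with P h1 h2
      have heq := hequ P h2
      have hdne : pdx (pdx f) P * u P + 2 * pdy (pdx f) P ≠ 0 := by linarith
      have h5 : u P + pdy (pdy f) P / 2
          = (pdy (pdy f) P * ((pdx (pdx f) P * u P + 2 * pdy (pdx f) P) - 2))
            / (2 * (pdx (pdx f) P * u P + 2 * pdy (pdx f) P)) := by
        rw [eq_div_iff (mul_ne_zero two_ne_zero hdne)]
        linear_combination (2 : ℝ) * heq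
      rw [h5, Real.norm_eq_abs, Real.norm_eq_abs, abs_div, one_mul]
      have h6 : (1:ℝ) ≤ |2 * (pdx (pdx f) P * u P + 2 * pdy (pdx f) P)| := by
        rw [abs_of_nonneg (by linarith)]
        linarith
      exact div_le_self (abs_nonneg _) h6
    constructor
    · -- conclusion (2)
      have h6 := T2.sub (Eyy.const_mul_left (1/2 : ℝ))
      refine h6.congr_left fun P => ?_
      ring
    · -- conclusion (3)
      have hfxxxO : (fun P : ℝ × ℝ => pdx (pdx (pdx f)) P) =O[nhds (0 : ℝ × ℝ)]
          fun _ : ℝ × ℝ => (1 : ℝ) := (sfxxx.continuous.tendsto 0).isBigO_one ℝ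
      have hfxxyO : (fun P : ℝ × ℝ => pdy (pdx (pdx f)) P) =O[nhds (0 : ℝ × ℝ)]
          fun _ : ℝ × ℝ => (1 : ℝ) := (sfxxy.continuous.tendsto 0).isBigO_one ℝ
      have B1 : (fun P : ℝ × ℝ => pdx (pdx (pdx f)) P * u P ^ 3)
          =o[nhds (0 : ℝ × ℝ)] fun P : ℝ × ℝ => ‖P‖ ^ 2 := by
        refine IsBigO.trans_isLittleO ?_ (normpow_o (show 2 < 6 by norm_num))
        exact (hfxxxO.mul (huO.pow 3)).congr_right fun P => by
          show (1 : ℝ) * (‖P‖ ^ 2) ^ 3 = ‖P‖ ^ 6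
          ring
      have B2 : (fun P : ℝ × ℝ => 3 * pdy (pdx (pdx f)) P * u P ^ 2)
          =o[nhds (0 : ℝ × ℝ)] fun P : ℝ × ℝ => ‖P‖ ^ 2 := by
        have h1 := (hfxxyO.mul (huO.pow 2)).const_mul_left 3
        refine IsBigO.trans_isLittleO ?_ (normpow_o (show 2 < 4 by norm_num))
        exact (h1.congr_left fun P => by ring).congr_right fun P => by
          show (1 : ℝ) * (‖P‖ ^ 2) ^ 2 = ‖P‖ ^ 4
          ring
      have B3 : (fun P : ℝ × ℝ => 3 * pdy (pdy (pdx f)) P * u P)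
          =o[nhds (0 : ℝ × ℝ)] fun P : ℝ × ℝ => ‖P‖ ^ 2 := by
        have hfxyyo : (fun P : ℝ × ℝ => pdy (pdy (pdx f)) P) =o[nhds (0 : ℝ × ℝ)]
            fun _ : ℝ × ℝ => (1 : ℝ) := by
          rw [isLittleO_one_iff]
          have := sfxyy.continuous.tendsto 0
          rwa [hfxyy0] at this
        have h1 := (huO.mul_isLittleO hfxyyo).const_mul_left 3
        refine (h1.congr_left fun P => by ring).congr_right fun P => ?_
        rw [mul_one]
      have hsum := ((B1.add B2).add B3).add Eyyy
      refine hsum.congr_left fun P => ?_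
      ring
end
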